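/- arXiv:1011.5468 — 4 statements merged into one kernel-verified Lean document; each statement's English description precedes it below -/
import Mathlib

section
/- (Fragmentation dependency, vanishing fragmentation.) Assume the standing assumptions and that β is locally essentially bounded on [0,∞). For each a > 0 let (Λ_a, Û_a) be a solution of the eigenproblem for (τ, aβ, κ). Then there exists r > 0 such that limsup_{a→0⁺} Λ_a ≤ r · limsup_{x→+∞} τ(x)/x (essential limsup, valued in [0,+∞]). -/
open MeasureTheory Filter Set Topology

noncomputable section

/-- A pair `(lam, U)` is a solution of the eigenproblem for `(τ, β, κ)`:
`lam > 0`; `U > 0` on `(0,∞)`; the eigen-equation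
`(τU)′(x) + (β(x)+lam)U(x) = 2∫_x^∞ β(y)κ(x,y)U(y) dy` holds for all `x > 0`;
`∫_0^∞ U = 1`; for every `r ≥ 0` the functions `x^r U`, `x^r β U`, `x^r τ U` are
integrable on `(0,∞)`; and `x^r τ(x)U(x) → 0` as `x → 0⁺` and as `x → +∞`. -/
structure EigenSolution (τ β : ℝ → ℝ) (κ : ℝ → ℝ → ℝ) (lam : ℝ) (U : ℝ → ℝ) : Prop where
  lam_pos : 0 < lam
  U_pos : ∀ x : ℝ, 0 < x → 0 < U x
  eqn : ∀ x : ℝ, 0 < x → HasDerivAt (fun y => τ y * U y)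
      (2 * (∫ y in Ioi x, β y * κ x y * U y) - (β x + lam) * U x) x
  normalized : (∫ x in Ioi (0:ℝ), U x) = 1
  int_U : ∀ r : ℝ, 0 ≤ r → IntegrableOn (fun x => x ^ r * U x) (Ioi 0) volume
  int_betaU : ∀ r : ℝ, 0 ≤ r → IntegrableOn (fun x => x ^ r * (β x * U x)) (Ioi 0) volume
  int_tauU : ∀ r : ℝ, 0 ≤ r → IntegrableOn (fun x => x ^ r * (τ x * U x)) (Ioi 0) volume
  lim_zero : ∀ r : ℝ, 0 ≤ r →
      Tendsto (fun x => x ^ r * (τ x * U x)) (nhdsWithin 0 (Ioi 0)) (nhds 0)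
  lim_top : ∀ r : ℝ, 0 ≤ r → Tendsto (fun x => x ^ r * (τ x * U x)) atTop (nhds 0)

/-- Assumptions on a fragmentation kernel `κ`: measurability, nonnegativity, support in
`{x ≤ y}`, total mass `1`, first moment `y/2`, second moment uniformly `≤ c < 1/2`, and the
tail estimate `∫_0^x κ(z,y) dz ≤ min(1, C₀ (x/y)^{γ₀})`. -/
structure KernelAssumptions (κ : ℝ → ℝ → ℝ) : Prop where
  meas : Measurable (Function.uncurry κ)
  nonneg : ∀ x y : ℝ, 0 ≤ κ x y
  supp : ∀ x y : ℝ, y < x → κ x y = 0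
  mass : ∀ y : ℝ, 0 < y → (∫ x in Ioc (0:ℝ) y, κ x y) = 1
  mean : ∀ y : ℝ, 0 < y → (∫ x in Ioc (0:ℝ) y, x * κ x y) = y / 2
  second : ∃ c : ℝ, c < 1/2 ∧ ∀ y : ℝ, 0 < y → (∫ x in Ioc (0:ℝ) y, (x / y) ^ 2 * κ x y) ≤ c
  tail : ∃ C₀ : ℝ, 0 < C₀ ∧ ∃ γ₀ : ℝ, 0 ≤ γ₀ ∧ ∀ x y : ℝ, 0 < x → x ≤ y →
      (∫ z in Ioc (0:ℝ) x, κ z y) ≤ min 1 (C₀ * (x / y) ^ γ₀)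

/-- The standing assumptions on the coefficients `(τ, β, κ)` of the growth-fragmentation
eigenproblem. -/
structure StandingAssumptions (τ β : ℝ → ℝ) (κ : ℝ → ℝ → ℝ) : Prop where
  τ_meas : Measurable τ
  β_meas : Measurable β
  τ_nonneg : ∀ x : ℝ, 0 < x → 0 ≤ τ x
  β_nonneg : ∀ x : ℝ, 0 < x → 0 ≤ β x
  kernel : KernelAssumptions κ
  /-- The tail constant `γ₀` of the kernel can be chosen so that `x^{γ₀}/τ(x)` is integrable
  near `0`. -/
  kernel_tau : ∃ C₀ : ℝ, 0 < C₀ ∧ ∃ γ₀ : ℝ, 0 ≤ γ₀ ∧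
      (∀ x y : ℝ, 0 < x → x ≤ y → (∫ z in Ioc (0:ℝ) x, κ z y) ≤ min 1 (C₀ * (x / y) ^ γ₀)) ∧
      ∃ a : ℝ, 0 < a ∧ IntegrableOn (fun x => x ^ γ₀ / τ x) (Ioc 0 a) volume
  β_locInt : LocallyIntegrableOn β (Ioi 0) volume
  /-- `limsup_{x→∞} x^{-μ} β(x) < ∞` and `liminf_{x→∞} x^{μ} β(x) > 0` for some `μ ≥ 0`. -/
  β_poly : ∃ μ : ℝ, 0 ≤ μ ∧ (∃ C : ℝ, ∀ᶠ x in atTop, β x ≤ C * x ^ μ) ∧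
      (∃ ε : ℝ, 0 < ε ∧ ∀ᶠ x in atTop, ε * x ^ (-μ) ≤ β x)
  /-- `x^{r₀} τ(x)` is locally essentially bounded on `[0,∞)` for some `r₀ ≥ 0`. -/
  τ_locBdd : ∃ r₀ : ℝ, 0 ≤ r₀ ∧ ∀ A : ℝ, 0 < A → ∃ C : ℝ,
      ∀ᵐ x ∂(volume.restrict (Ioc (0:ℝ) A)), x ^ r₀ * τ x ≤ C
  /-- `limsup_{x→∞} x^{-μ'} τ(x) < ∞` and `liminf_{x→∞} x^{μ'} τ(x) > 0` for some `μ' ≥ 0`. -/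
  τ_poly : ∃ μ' : ℝ, 0 ≤ μ' ∧ (∃ C : ℝ, ∀ᶠ x in atTop, τ x ≤ C * x ^ μ') ∧
      (∃ ε : ℝ, 0 < ε ∧ ∀ᶠ x in atTop, ε * x ^ (-μ') ≤ τ x)
  /-- On every compact subset of `(0,∞)`, `τ` and `β` are a.e. bounded below by a positive
  constant. -/
  pos_on_compacts : ∀ K : Set ℝ, IsCompact K → K ⊆ Ioi 0 →
      ∃ m : ℝ, 0 < m ∧ ∀ᵐ x ∂(volume.restrict K), m ≤ τ x ∧ m ≤ β x
  /-- `β/τ` is integrable near `0`. -/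
  βτ_int0 : ∃ a : ℝ, 0 < a ∧ IntegrableOn (fun x => β x / τ x) (Ioc 0 a) volume
  /-- `x β(x)/τ(x) → +∞` as `x → +∞`. -/
  frag_dominates : Tendsto (fun x => x * β x / τ x) atTop atTop

/-- The rescaled growth rate `τ_α(x) = α^{-kν} τ(α^k x)`. -/
def tauScaled (τ : ℝ → ℝ) (k ν : ℝ) (α : ℝ) : ℝ → ℝ :=
  fun x => α ^ (-(k * ν)) * τ (α ^ k * x)

/-- The rescaled fragmentation rate `β_α(x) = α^{-kγ} β(α^k x)`. -/
def betaScaled (β : ℝ → ℝ) (k γ : ℝ) (α : ℝ) : ℝ → ℝ :=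
  fun x => α ^ (-(k * γ)) * β (α ^ k * x)

/-- The rescaled fragmentation kernel `κ_α(x,y) = α^k κ(α^k x, α^k y)`. -/
def kappaScaled (κ : ℝ → ℝ → ℝ) (k : ℝ) (α : ℝ) : ℝ → ℝ → ℝ :=
  fun x y => α ^ k * κ (α ^ k * x) (α ^ k * y)

/-- Power-law behaviour of `τ` and `β` along the filter `ℓ` (either `x → 0⁺` or `x → +∞`):
`τ(x) ~ τb x^ν` and `β(x) ~ βb x^γ`, with `1 + γ - ν > 0` and `τb, βb > 0`. -/
structure PowerLaw (τ β : ℝ → ℝ) (ℓ : Filter ℝ) (ν γ τb βb : ℝ) : Prop where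
  one_add_pos : 0 < 1 + γ - ν
  τb_pos : 0 < τb
  βb_pos : 0 < βb
  τ_equiv : Tendsto (fun x => τ x / (τb * x ^ ν)) ℓ (nhds 1)
  β_equiv : Tendsto (fun x => β x / (βb * x ^ γ)) ℓ (nhds 1)

/-- Kernel-limit assumption: for a.e. `y > 0`, the rescaled kernels `κ_α(·,y)` converge in the
sense of distributions to `κL(·,y)` as `α` tends along `ℓα`. -/
def KernelLimit (κ κL : ℝ → ℝ → ℝ) (k : ℝ) (ℓα : Filter ℝ) : Prop :=
  ∀ᵐ y ∂(volume.restrict (Ioi (0:ℝ))),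
    ∀ φ : ℝ → ℝ, ContDiff ℝ (⊤ : ℕ∞) φ → HasCompactSupport φ →
      Tendsto (fun α => ∫ x in Ioi (0:ℝ), φ x * kappaScaled κ k α x y) ℓα
        (nhds (∫ x in Ioi (0:ℝ), φ x * κL x y))

set_option maxHeartbeats 1000000 in
theorem eigen_key
    (τ β : ℝ → ℝ) (κ : ℝ → ℝ → ℝ)
    (hτ0 : ∀ x : ℝ, 0 < x → 0 ≤ τ x) (hβ0 : ∀ x : ℝ, 0 < x → 0 ≤ β x)
    (hκmeas : Measurable (Function.uncurry κ)) (hκ0 : ∀ x y : ℝ, 0 ≤ κ x y)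
    (hκsupp : ∀ x y : ℝ, y < x → κ x y = 0)
    (hκmass : ∀ y : ℝ, 0 < y → (∫ x in Ioc (0:ℝ) y, κ x y) = 1)
    (c : ℝ) (hc : c ≤ 1/2) (hc0 : 0 ≤ c)
    (hκsec : ∀ y : ℝ, 0 < y → (∫ x in Ioc (0:ℝ) y, (x / y) ^ 2 * κ x y) ≤ c)
    (a lam : ℝ) (ha : 0 < a) (U : ℝ → ℝ)
    (sol : EigenSolution τ (fun x => a * β x) κ lam U)
    (p : ℝ) (hp : 2 ≤ p)
    (A ℓ : ℝ) (hA1 : 1 ≤ A) (hℓ0 : 0 ≤ ℓ)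
    (hτA : ∀ᵐ x ∂(volume : Measure ℝ), A ≤ x → τ x ≤ ℓ * x)
    (B C₂ C₃ : ℝ) (hB1 : 1 ≤ B) (hC₂ : 0 ≤ C₂) (hC₃ : 0 ≤ C₃)
    (hβB : ∀ x : ℝ, B ≤ x → β x ≤ C₂ * x ^ p)
    (hβsmall : ∀ᵐ x ∂(volume.restrict (Ioc (0:ℝ) B)), β x ≤ C₃) :
    lam ≤ max (2 * p * ℓ) (a * (C₃ + C₂ * (4 * p * A ^ p))) := by
  have hp0 : (0:ℝ) ≤ p := by linarith
  have hA0 : (0:ℝ) < A := by linarith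
  have hlam := sol.lam_pos
  have hUpos := sol.U_pos
  -- basic integrabilities
  have hU_int : IntegrableOn U (Ioi 0) volume := by
    have h := sol.int_U 0 le_rfl
    simpa [Real.rpow_zero] using h
  have hβU_int : IntegrableOn (fun x => a * β x * U x) (Ioi 0) volume := by
    have h := sol.int_betaU 0 le_rfl
    simpa [Real.rpow_zero] using h
  have hβU_nonneg : ∀ x : ℝ, 0 < x → 0 ≤ a * β x * U x := fun x hx =>
    mul_nonneg (mul_nonneg ha.le (hβ0 x hx)) (hUpos x hx).le
  -- measurable modification of a*β*U
  obtain ⟨V, hVm, hV0, hVe⟩ : ∃ V : ℝ → ℝ, Measurable V ∧ (∀ y, 0 ≤ V y) ∧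
      (fun y => a * β y * U y) =ᵐ[volume.restrict (Ioi 0)] V := by
    have hsm := hβU_int.aestronglyMeasurable
    refine ⟨fun y => max (hsm.mk _ y) 0, (hsm.stronglyMeasurable_mk.measurable).max
      measurable_const, fun y => le_max_right _ _, ?_⟩
    filter_upwards [hsm.ae_eq_mk, ae_restrict_mem measurableSet_Ioi] with y h1 h2
    rw [← h1, max_eq_left (hβU_nonneg y h2)]
  -- the truncated integral, in lintegral form
  set L : ℝ → ENNReal := fun x => ∫⁻ y in Ioi 0, ENNReal.ofReal (κ x y * V y) with hLdef
  have hLm : Measurable L := by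
    have hm : Measurable (Function.uncurry fun x y : ℝ => ENNReal.ofReal (κ x y * V y)) :=
      (hκmeas.mul (hVm.comp measurable_snd)).ennreal_ofReal
    exact hm.lintegral_prod_right'
  set I : ℝ → ℝ := fun x => (L x).toReal with hIdef
  have hIm : Measurable I := hLm.ennreal_toReal
  have hI0 : ∀ x, 0 ≤ I x := fun x => ENNReal.toReal_nonneg
  have hI_eq : ∀ x : ℝ, 0 < x → (∫ y in Ioi x, a * β y * κ x y * U y) = I x := by
    intro x hx
    have hsub : Ioi x ⊆ Ioi (0:ℝ) := Ioi_subset_Ioi hx.le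
    have e1 : (∫ y in Ioi x, a * β y * κ x y * U y) = ∫ y in Ioi x, κ x y * V y := by
      refine integral_congr_ae ?_
      filter_upwards [ae_restrict_of_ae_restrict_of_subset hsub hVe] with y hy
      rw [← hy]; ring
    have e2 : (∫ y in Ioi x, κ x y * V y)
        = (∫⁻ y in Ioi x, ENNReal.ofReal (κ x y * V y)).toReal := by
      rw [integral_eq_lintegral_of_nonneg_ae
        (Eventually.of_forall fun y => mul_nonneg (hκ0 x y) (hV0 y))
        ((hκmeas.of_uncurry_left.mul hVm).aestronglyMeasurable)]
    have e3 : (∫⁻ y in Ioi x, ENNReal.ofReal (κ x y * V y)) = L x := by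
      have hsplit : Ioi (0:ℝ) = Ioc 0 x ∪ Ioi x := (Ioc_union_Ioi_eq_Ioi hx.le).symm
      have h0 : (∫⁻ y in Ioc (0:ℝ) x, ENNReal.ofReal (κ x y * V y)) = 0 := by
        rw [← setLIntegral_congr (Ioo_ae_eq_Ioc (a := (0:ℝ)) (b := x))]
        have hz : ∀ y ∈ Ioo (0:ℝ) x, ENNReal.ofReal (κ x y * V y) = (fun _ => (0:ENNReal)) y := by
          intro y hy
          rw [hκsupp x y hy.2, zero_mul, ENNReal.ofReal_zero]
        rw [setLIntegral_congr_fun measurableSet_Ioo hz, lintegral_zero]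
      rw [hLdef]
      simp only [hsplit, lintegral_union measurableSet_Ioi (Ioc_disjoint_Ioi le_rfl), h0,
        zero_add]
    rw [e1, e2, e3]
  -- Fubini computation
  have hswap : ∀ q : ℝ, (∫⁻ x in Ioi 0, ENNReal.ofReal (x ^ q) * L x)
      = ∫⁻ y in Ioi 0,
          (∫⁻ x in Ioi 0, ENNReal.ofReal (x ^ q) * ENNReal.ofReal (κ x y)) * ENNReal.ofReal (V y) := by
    intro q
    have hminner : ∀ x : ℝ, Measurable (fun y => ENNReal.ofReal (κ x y * V y)) := fun x =>
      ((hκmeas.of_uncurry_left).mul hVm).ennreal_ofReal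
    have hm : Measurable (fun z : ℝ × ℝ => ENNReal.ofReal (z.1 ^ q) * ENNReal.ofReal (κ z.1 z.2 * V z.2)) := by
      refine Measurable.mul (f := fun z : ℝ × ℝ => ENNReal.ofReal (z.1 ^ q)) (g := fun z : ℝ × ℝ => ENNReal.ofReal (κ z.1 z.2 * V z.2)) ?_ ?_
      · exact ((measurable_fst).pow_const q).ennreal_ofReal
      · exact (hκmeas.mul (hVm.comp measurable_snd)).ennreal_ofReal
    calc (∫⁻ x in Ioi 0, ENNReal.ofReal (x ^ q) * L x)
        = ∫⁻ x in Ioi (0:ℝ), ∫⁻ y in Ioi (0:ℝ),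
            ENNReal.ofReal (x ^ q) * ENNReal.ofReal (κ x y * V y) := by
          refine lintegral_congr fun x => ?_
          rw [hLdef]
          exact (lintegral_const_mul _ (hminner x)).symm
      _ = ∫⁻ y in Ioi (0:ℝ), ∫⁻ x in Ioi (0:ℝ),
            ENNReal.ofReal (x ^ q) * ENNReal.ofReal (κ x y * V y) :=
          lintegral_lintegral_swap hm.aemeasurable
      _ = ∫⁻ y in Ioi (0:ℝ),
            (∫⁻ x in Ioi 0, ENNReal.ofReal (x ^ q) * ENNReal.ofReal (κ x y)) * ENNReal.ofReal (V y) := by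
          refine lintegral_congr fun y => ?_
          have e : ∀ x : ℝ, ENNReal.ofReal (x ^ q) * ENNReal.ofReal (κ x y * V y)
              = (ENNReal.ofReal (x ^ q) * ENNReal.ofReal (κ x y)) * ENNReal.ofReal (V y) := by
            intro x
            rw [ENNReal.ofReal_mul (hκ0 x y), mul_assoc]
          simp only [e]
          exact lintegral_mul_const' _ _ ENNReal.ofReal_ne_top
  have hκint : ∀ y : ℝ, 0 < y → IntegrableOn (fun x => κ x y) (Ioc 0 y) volume := by
    intro y hy
    by_contra h
    exact one_ne_zero ((hκmass y hy).symm.trans (integral_undef h))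
  have hJ0 : ∀ y : ℝ, 0 < y →
      (∫⁻ x in Ioi 0, ENNReal.ofReal (x ^ (0:ℝ)) * ENNReal.ofReal (κ x y)) = 1 := by
    intro y hy
    have hsplit : Ioi (0:ℝ) = Ioc 0 y ∪ Ioi y := (Ioc_union_Ioi_eq_Ioi hy.le).symm
    have h0 : (∫⁻ x in Ioi y, ENNReal.ofReal (x ^ (0:ℝ)) * ENNReal.ofReal (κ x y)) = 0 := by
      have hz : ∀ x ∈ Ioi y, ENNReal.ofReal (x ^ (0:ℝ)) * ENNReal.ofReal (κ x y)
          = (fun _ => (0:ENNReal)) x := by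
        intro x hx
        rw [hκsupp x y hx, ENNReal.ofReal_zero, mul_zero]
      rw [setLIntegral_congr_fun measurableSet_Ioi hz, lintegral_zero]
    have h1 : (∫⁻ x in Ioc (0:ℝ) y, ENNReal.ofReal (x ^ (0:ℝ)) * ENNReal.ofReal (κ x y)) = 1 := by
      have he : ∀ x ∈ Ioc (0:ℝ) y, ENNReal.ofReal (x ^ (0:ℝ)) * ENNReal.ofReal (κ x y)
          = (fun x => ENNReal.ofReal (κ x y)) x := by
        intro x hx
        rw [Real.rpow_zero, ENNReal.ofReal_one, one_mul]
      rw [setLIntegral_congr_fun measurableSet_Ioc he,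
        ← ofReal_integral_eq_lintegral_ofReal (hκint y hy)
          (Eventually.of_forall fun x => hκ0 x y),
        hκmass y hy, ENNReal.ofReal_one]
    rw [hsplit, lintegral_union measurableSet_Ioi (Ioc_disjoint_Ioi le_rfl), h0, add_zero, h1]
  have hJp : ∀ y : ℝ, 0 < y →
      (∫⁻ x in Ioi 0, ENNReal.ofReal (x ^ p) * ENNReal.ofReal (κ x y))
        ≤ ENNReal.ofReal (c * y ^ p) := by
    intro y hy
    have hsplit : Ioi (0:ℝ) = Ioc 0 y ∪ Ioi y := (Ioc_union_Ioi_eq_Ioi hy.le).symm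
    have h0 : (∫⁻ x in Ioi y, ENNReal.ofReal (x ^ p) * ENNReal.ofReal (κ x y)) = 0 := by
      have hz : ∀ x ∈ Ioi y, ENNReal.ofReal (x ^ p) * ENNReal.ofReal (κ x y)
          = (fun _ => (0:ENNReal)) x := by
        intro x hx
        rw [hκsupp x y hx, ENNReal.ofReal_zero, mul_zero]
      rw [setLIntegral_congr_fun measurableSet_Ioi hz, lintegral_zero]
    have hsec_int : IntegrableOn (fun x => (x / y) ^ 2 * κ x y) (Ioc 0 y) volume := by
      refine Integrable.mono' (hκint y hy)
        (((measurable_id.div_const y).pow_const 2).mul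
          hκmeas.of_uncurry_right).aestronglyMeasurable ?_
      filter_upwards [ae_restrict_mem measurableSet_Ioc] with x hx
      have hd0 : (0:ℝ) ≤ x / y := div_nonneg hx.1.le hy.le
      have hd1 : x / y ≤ 1 := div_le_one_of_le₀ hx.2 hy.le
      rw [Real.norm_eq_abs, abs_of_nonneg (mul_nonneg (pow_nonneg hd0 2) (hκ0 x y))]
      calc (x / y) ^ 2 * κ x y ≤ 1 * κ x y := by
            refine mul_le_mul_of_nonneg_right ?_ (hκ0 x y)
            calc (x / y) ^ 2 ≤ 1 ^ 2 := pow_le_pow_left₀ hd0 hd1 2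
              _ = 1 := one_pow 2
        _ = κ x y := one_mul _
    have h1 : (∫⁻ x in Ioc (0:ℝ) y, ENNReal.ofReal (x ^ p) * ENNReal.ofReal (κ x y))
        ≤ ENNReal.ofReal (c * y ^ p) := by
      have hmono : ∀ x ∈ Ioc (0:ℝ) y, ENNReal.ofReal (x ^ p) * ENNReal.ofReal (κ x y)
          ≤ (fun x => ENNReal.ofReal (y ^ p) * ENNReal.ofReal ((x / y) ^ 2 * κ x y)) x := by
        intro x hx
        show ENNReal.ofReal (x ^ p) * ENNReal.ofReal (κ x y)
          ≤ ENNReal.ofReal (y ^ p) * ENNReal.ofReal ((x / y) ^ 2 * κ x y)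
        rw [← ENNReal.ofReal_mul (Real.rpow_nonneg hx.1.le p),
          ← ENNReal.ofReal_mul (Real.rpow_nonneg hy.le p)]
        refine ENNReal.ofReal_le_ofReal ?_
        have hd0 : (0:ℝ) < x / y := div_pos hx.1 hy
        have hd1 : x / y ≤ 1 := div_le_one_of_le₀ hx.2 hy.le
        have e1 : x ^ p = y ^ p * (x / y) ^ p := by
          rw [← Real.mul_rpow hy.le hd0.le, mul_div_cancel₀ x hy.ne']
        have e2 : (x / y) ^ p ≤ (x / y) ^ 2 := by
          have := Real.rpow_le_rpow_of_exponent_ge hd0 hd1 hp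
          rwa [show ((2:ℝ)) = ((2:ℕ):ℝ) by norm_num, Real.rpow_natCast] at this
        calc x ^ p * κ x y = y ^ p * (x / y) ^ p * κ x y := by rw [e1]
          _ ≤ y ^ p * (x / y) ^ 2 * κ x y := by
              refine mul_le_mul_of_nonneg_right ?_ (hκ0 x y)
              exact mul_le_mul_of_nonneg_left e2 (Real.rpow_nonneg hy.le p)
          _ = y ^ p * ((x / y) ^ 2 * κ x y) := by ring
      calc (∫⁻ x in Ioc (0:ℝ) y, ENNReal.ofReal (x ^ p) * ENNReal.ofReal (κ x y))
          ≤ ∫⁻ x in Ioc (0:ℝ) y,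
              ENNReal.ofReal (y ^ p) * ENNReal.ofReal ((x / y) ^ 2 * κ x y) :=
            setLIntegral_mono' measurableSet_Ioc hmono
        _ = ENNReal.ofReal (y ^ p) * ∫⁻ x in Ioc (0:ℝ) y, ENNReal.ofReal ((x / y) ^ 2 * κ x y) :=
            lintegral_const_mul _ (((measurable_id.div_const y).pow_const 2).mul
              hκmeas.of_uncurry_right).ennreal_ofReal
        _ = ENNReal.ofReal (y ^ p) * ENNReal.ofReal (∫ x in Ioc (0:ℝ) y, (x / y) ^ 2 * κ x y) := by
            rw [ofReal_integral_eq_lintegral_ofReal hsec_int (by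
              filter_upwards [ae_restrict_mem measurableSet_Ioc] with x hx
              exact mul_nonneg (pow_nonneg (div_nonneg hx.1.le hy.le) 2) (hκ0 x y))]
        _ ≤ ENNReal.ofReal (y ^ p) * ENNReal.ofReal c :=
            mul_le_mul_right (ENNReal.ofReal_le_ofReal (hκsec y hy)) _
        _ = ENNReal.ofReal (c * y ^ p) := by
            rw [← ENNReal.ofReal_mul (Real.rpow_nonneg hy.le p), mul_comm]
    calc (∫⁻ x in Ioi 0, ENNReal.ofReal (x ^ p) * ENNReal.ofReal (κ x y))
        = (∫⁻ x in Ioc (0:ℝ) y, ENNReal.ofReal (x ^ p) * ENNReal.ofReal (κ x y))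
          + ∫⁻ x in Ioi y, ENNReal.ofReal (x ^ p) * ENNReal.ofReal (κ x y) := by
          rw [hsplit, lintegral_union measurableSet_Ioi (Ioc_disjoint_Ioi le_rfl)]
      _ ≤ ENNReal.ofReal (c * y ^ p) := by rw [h0, add_zero]; exact h1
  have hβU_ae_nonneg : 0 ≤ᵐ[volume.restrict (Ioi (0:ℝ))] fun x => a * β x * U x := by
    filter_upwards [ae_restrict_mem measurableSet_Ioi] with x hx
    exact hβU_nonneg x hx
  have hS0 : (∫⁻ x in Ioi 0, L x) = ENNReal.ofReal (∫ x in Ioi 0, a * β x * U x) := by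
    have h := hswap 0
    simp only [Real.rpow_zero, ENNReal.ofReal_one, one_mul] at h
    rw [h]
    have e1 : ∫⁻ y in Ioi (0:ℝ),
        (∫⁻ x in Ioi (0:ℝ), ENNReal.ofReal (κ x y)) * ENNReal.ofReal (V y)
        = ∫⁻ y in Ioi (0:ℝ), ENNReal.ofReal (V y) := by
      refine lintegral_congr_ae ?_
      filter_upwards [ae_restrict_mem measurableSet_Ioi] with y hy
      have h2 := hJ0 y hy
      simp only [Real.rpow_zero, ENNReal.ofReal_one, one_mul] at h2
      rw [h2, one_mul]
    have e2 : ∫⁻ y in Ioi (0:ℝ), ENNReal.ofReal (V y)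
        = ∫⁻ y in Ioi (0:ℝ), ENNReal.ofReal (a * β y * U y) :=
      (lintegral_congr_ae (hVe.fun_comp ENNReal.ofReal)).symm
    rw [e1, e2, ← ofReal_integral_eq_lintegral_ofReal hβU_int hβU_ae_nonneg]
  have hLlt : ∀ᵐ x ∂(volume.restrict (Ioi (0:ℝ))), L x < ⊤ := by
    refine ae_lt_top hLm ?_
    rw [hS0]; exact ENNReal.ofReal_ne_top
  have hofRealI : ∀ᵐ x ∂(volume.restrict (Ioi (0:ℝ))), ENNReal.ofReal (I x) = L x := by
    filter_upwards [hLlt] with x h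
    exact ENNReal.ofReal_toReal h.ne
  have hβUint_nonneg : 0 ≤ ∫ x in Ioi (0:ℝ), a * β x * U x :=
    setIntegral_nonneg measurableSet_Ioi fun x hx => hβU_nonneg x hx
  have hI_int : IntegrableOn I (Ioi 0) volume := by
    refine ⟨hIm.aestronglyMeasurable, ?_⟩
    rw [hasFiniteIntegral_iff_ofReal (Eventually.of_forall hI0),
      lintegral_congr_ae hofRealI, hS0]
    exact ENNReal.ofReal_lt_top
  have h_int_I : (∫ x in Ioi (0:ℝ), I x) = ∫ x in Ioi (0:ℝ), a * β x * U x := by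
    rw [integral_eq_lintegral_of_nonneg_ae (Eventually.of_forall hI0) hIm.aestronglyMeasurable,
      lintegral_congr_ae hofRealI, hS0, ENNReal.toReal_ofReal hβUint_nonneg]
  have hβUp_int : IntegrableOn (fun x => x ^ p * (a * β x * U x)) (Ioi 0) volume := by
    have h := sol.int_betaU p hp0; exact h
  have hβUp_nonneg : 0 ≤ ∫ x in Ioi (0:ℝ), x ^ p * (a * β x * U x) :=
    setIntegral_nonneg measurableSet_Ioi fun x hx =>
      mul_nonneg (Real.rpow_nonneg (le_of_lt hx) p) (hβU_nonneg x hx)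
  have hSp : (∫⁻ x in Ioi 0, ENNReal.ofReal (x ^ p) * L x)
      ≤ ENNReal.ofReal (c * ∫ x in Ioi 0, x ^ p * (a * β x * U x)) := by
    rw [hswap p]
    have step1 : ∫⁻ y in Ioi (0:ℝ),
        (∫⁻ x in Ioi (0:ℝ), ENNReal.ofReal (x ^ p) * ENNReal.ofReal (κ x y)) * ENNReal.ofReal (V y)
        ≤ ∫⁻ y in Ioi (0:ℝ), ENNReal.ofReal (c * y ^ p) * ENNReal.ofReal (V y) := by
      refine lintegral_mono_ae ?_
      filter_upwards [ae_restrict_mem measurableSet_Ioi] with y hy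
      exact mul_le_mul_left (hJp y hy) _
    refine le_trans step1 (le_of_eq ?_)
    have step2 : ∫⁻ y in Ioi (0:ℝ), ENNReal.ofReal (c * y ^ p) * ENNReal.ofReal (V y)
        = ∫⁻ y in Ioi (0:ℝ), ENNReal.ofReal (c * (y ^ p * (a * β y * U y))) := by
      refine lintegral_congr_ae ?_
      filter_upwards [hVe, ae_restrict_mem measurableSet_Ioi] with y hv hy
      rw [← hv, ← ENNReal.ofReal_mul (mul_nonneg hc0 (Real.rpow_nonneg hy.le p))]
      congr 1
      ring
    rw [step2, ← integral_const_mul,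
      ← ofReal_integral_eq_lintegral_ofReal (hβUp_int.const_mul c) ?_]
    filter_upwards [ae_restrict_mem measurableSet_Ioi] with y hy
    exact mul_nonneg hc0 (mul_nonneg (Real.rpow_nonneg hy.le p) (hβU_nonneg y hy))
  have hxpI_pos_ae : 0 ≤ᵐ[volume.restrict (Ioi (0:ℝ))] fun x => x ^ p * I x := by
    filter_upwards [ae_restrict_mem measurableSet_Ioi] with x hx
    exact mul_nonneg (Real.rpow_nonneg hx.le p) (hI0 x)
  have hofRealxpI : ∀ᵐ x ∂(volume.restrict (Ioi (0:ℝ))),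
      ENNReal.ofReal (x ^ p * I x) = ENNReal.ofReal (x ^ p) * L x := by
    filter_upwards [hofRealI, ae_restrict_mem measurableSet_Ioi] with x h hx
    rw [ENNReal.ofReal_mul (Real.rpow_nonneg hx.le p), h]
  have hxpI_int : IntegrableOn (fun x => x ^ p * I x) (Ioi 0) volume := by
    refine ⟨((measurable_id.pow_const p).mul hIm).aestronglyMeasurable, ?_⟩
    rw [hasFiniteIntegral_iff_ofReal hxpI_pos_ae, lintegral_congr_ae hofRealxpI]
    exact lt_of_le_of_lt hSp ENNReal.ofReal_lt_top
  have h2I : 2 * (∫ x in Ioi (0:ℝ), x ^ p * I x) ≤ ∫ x in Ioi (0:ℝ), x ^ p * (a * β x * U x) := by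
    have e : (∫ x in Ioi (0:ℝ), x ^ p * I x)
        = (∫⁻ x in Ioi 0, ENNReal.ofReal (x ^ p) * L x).toReal := by
      rw [integral_eq_lintegral_of_nonneg_ae hxpI_pos_ae
        ((measurable_id.pow_const p).mul hIm).aestronglyMeasurable,
        lintegral_congr_ae hofRealxpI]
    have hle : (∫ x in Ioi (0:ℝ), x ^ p * I x)
        ≤ c * ∫ x in Ioi (0:ℝ), x ^ p * (a * β x * U x) := by
      rw [e]
      calc (∫⁻ x in Ioi 0, ENNReal.ofReal (x ^ p) * L x).toReal
          ≤ (ENNReal.ofReal (c * ∫ x in Ioi 0, x ^ p * (a * β x * U x))).toReal :=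
            ENNReal.toReal_mono ENNReal.ofReal_ne_top hSp
        _ = c * ∫ x in Ioi 0, x ^ p * (a * β x * U x) :=
            ENNReal.toReal_ofReal (mul_nonneg hc0 hβUp_nonneg)
    nlinarith [hβUp_nonneg, hle, hc]
  -- FTC
  have hFTC : ∀ q : ℝ, 0 ≤ q →
      IntegrableOn (fun x => q * x ^ (q-1) * (τ x * U x)) (Ioi 0) volume →
      IntegrableOn (fun x => x ^ q * I x) (Ioi 0) volume →
      ((∫ x in Ioi (0:ℝ),
        (q * x ^ (q-1) * (τ x * U x) + x ^ q * (2 * I x - (a * β x + lam) * U x))) = 0 ∧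
       ∀ u z : ℝ, 0 < u → u ≤ z →
        (∫ t in u..z,
          (q * t ^ (q-1) * (τ t * U t) + t ^ q * (2 * I t - (a * β t + lam) * U t)))
          = z ^ q * (τ z * U z) - u ^ q * (τ u * U u)) := by
    intro q hq hint1 hint2
    set φ : ℝ → ℝ :=
      fun x => q * x ^ (q-1) * (τ x * U x) + x ^ q * (2 * I x - (a * β x + lam) * U x) with hφdef
    set G : ℝ → ℝ := fun x => x ^ q * (τ x * U x) with hGdef
    have hβUq_int : IntegrableOn (fun x => x ^ q * (a * β x * U x)) (Ioi 0) volume :=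
      sol.int_betaU q hq
    have hUq_int : IntegrableOn (fun x => x ^ q * U x) (Ioi 0) volume := sol.int_U q hq
    have hφeq : ∀ x : ℝ, φ x = q * x ^ (q-1) * (τ x * U x)
        + (2 * (x ^ q * I x) - (x ^ q * (a * β x * U x) + lam * (x ^ q * U x))) := by
      intro x
      rw [hφdef]
      set t := x ^ q
      set s := x ^ (q-1)
      ring
    have hφi : IntegrableOn φ (Ioi 0) volume := by
      refine (hint1.add ((hint2.const_mul 2).sub (hβUq_int.add (hUq_int.const_mul lam)))).congr
        (Eventually.of_forall fun x => ?_)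
      simp only [Pi.add_apply, Pi.sub_apply]
      exact (hφeq x).symm
    have hGd : ∀ x ∈ Ioi (0:ℝ), HasDerivAt G (φ x) x := by
      intro x hx
      have h1 : HasDerivAt (fun y : ℝ => y ^ q) (q * x ^ (q-1)) x :=
        Real.hasDerivAt_rpow_const (Or.inl (ne_of_gt hx))
      have h2 : HasDerivAt (fun y => τ y * U y)
          (2 * (∫ y in Ioi x, a * β y * κ x y * U y) - (a * β x + lam) * U x) x :=
        sol.eqn x hx
      have h3 := h1.mul h2
      rw [hI_eq x hx] at h3
      exact h3
    have h1 : ∀ u z : ℝ, 0 < u → u ≤ z → (∫ t in u..z, φ t) = G z - G u := by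
      intro u z hu huz
      refine intervalIntegral.integral_eq_sub_of_hasDerivAt (fun x hx => hGd x ?_) ?_
      · rw [uIcc_of_le huz] at hx
        exact lt_of_lt_of_le hu hx.1
      · refine (hφi.mono_set ?_).intervalIntegrable
        rw [uIcc_of_le huz]
        exact fun x hx => lt_of_lt_of_le hu hx.1
    have h2 : ∀ u : ℝ, 0 < u → (∫ t in Ioi u, φ t) = - G u := by
      intro u hu
      have ht1 : Tendsto (fun z => ∫ t in u..z, φ t) atTop (nhds (∫ t in Ioi u, φ t)) :=
        intervalIntegral_tendsto_integral_Ioi u (hφi.mono_set (Ioi_subset_Ioi hu.le)) tendsto_id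
      have hev : (fun z => G z - G u) =ᶠ[atTop] fun z => ∫ t in u..z, φ t := by
        filter_upwards [eventually_ge_atTop u] with z hz
        exact (h1 u z hu hz).symm
      have ht2 : Tendsto (fun z => ∫ t in u..z, φ t) atTop (nhds (0 - G u)) :=
        (((sol.lim_top q hq).sub_const (G u)).congr' hev)
      have := tendsto_nhds_unique ht1 ht2
      rwa [zero_sub] at this
    refine ⟨?_, fun u z hu huz => h1 u z hu huz⟩
    have hseq : Tendsto (fun n : ℕ => ∫ t in Ioi (1/((n:ℝ)+1)), φ t) atTop
        (nhds (∫ x in Ioi 0, φ x)) := by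
      have hmono : Monotone (fun n : ℕ => Ioi (1/((n:ℝ)+1))) := by
        intro m n hmn
        refine Ioi_subset_Ioi (one_div_le_one_div_of_le (by positivity) ?_)
        have : (m:ℝ) ≤ (n:ℝ) := Nat.cast_le.2 hmn
        linarith
      have hunion : (⋃ n : ℕ, Ioi (1/((n:ℝ)+1))) = Ioi (0:ℝ) := by
        ext x
        simp only [mem_iUnion, mem_Ioi]
        constructor
        · rintro ⟨n, hn⟩
          exact lt_trans (by positivity) hn
        · intro hx
          exact exists_nat_one_div_lt hx
      have h := tendsto_setIntegral_of_monotone (fun n => measurableSet_Ioi) hmono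
        (by rw [hunion]; exact hφi)
      rwa [hunion] at h
    have hseq2 : Tendsto (fun n : ℕ => ∫ t in Ioi (1/((n:ℝ)+1)), φ t) atTop (nhds 0) := by
      have hpos : ∀ n : ℕ, (0:ℝ) < 1/((n:ℝ)+1) := fun n => by positivity
      have heq : (fun n : ℕ => ∫ t in Ioi (1/((n:ℝ)+1)), φ t)
          = fun n : ℕ => - G (1/((n:ℝ)+1)) := by
        funext n
        exact h2 _ (hpos n)
      rw [heq]
      have htend0 : Tendsto (fun n : ℕ => 1/((n:ℝ)+1)) atTop (nhdsWithin 0 (Ioi 0)) :=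
        tendsto_nhdsWithin_iff.2 ⟨tendsto_one_div_add_atTop_nhds_zero_nat,
          Eventually.of_forall fun n => hpos n⟩
      have hcomp := (sol.lim_zero q hq).comp htend0
      have : Tendsto (fun n : ℕ => G (1/((n:ℝ)+1))) atTop (nhds 0) := hcomp
      simpa using this.neg
    exact tendsto_nhds_unique hseq hseq2
  -- q = 0 consequences
  have hzero_int : IntegrableOn (fun x : ℝ => (0:ℝ) * x ^ ((0:ℝ)-1) * (τ x * U x)) (Ioi 0) volume := by
    have e : (fun x : ℝ => (0:ℝ) * x ^ ((0:ℝ)-1) * (τ x * U x)) = fun _ => (0:ℝ) := by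
      funext x; ring
    rw [e]
    exact integrableOn_zero
  have hI0_int : IntegrableOn (fun x : ℝ => x ^ (0:ℝ) * I x) (Ioi 0) volume := by
    have e : (fun x : ℝ => x ^ (0:ℝ) * I x) = I := by
      funext x; rw [Real.rpow_zero, one_mul]
    rw [e]; exact hI_int
  obtain ⟨hFTC0, hFTC0'⟩ := hFTC 0 le_rfl hzero_int hI0_int
  simp only [Real.rpow_zero, one_mul, zero_mul, zero_add] at hFTC0
  have hDi : IntegrableOn (fun x => 2 * I x - (a * β x + lam) * U x) (Ioi 0) volume := by
    refine ((hI_int.const_mul 2).sub (hβU_int.add (hU_int.const_mul lam))).congr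
      (Eventually.of_forall fun x => ?_)
    simp only [Pi.sub_apply, Pi.add_apply]
    ring
  have hlam_eq : lam = ∫ x in Ioi (0:ℝ), a * β x * U x := by
    have e : (fun x : ℝ => 2 * I x - (a * β x + lam) * U x)
        = fun x => 2 * I x - (a * β x * U x + lam * U x) := by
      funext x; ring
    rw [e] at hFTC0
    have hf₂ : IntegrableOn (fun x => a * β x * U x + lam * U x) (Ioi 0) volume :=
      hβU_int.add (hU_int.const_mul lam)
    rw [integral_sub (hI_int.const_mul 2) hf₂,
      integral_add hβU_int (hU_int.const_mul lam), integral_const_mul, integral_const_mul,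
      h_int_I, sol.normalized] at hFTC0
    linarith
  have hg2lam : ∀ z : ℝ, 0 < z → τ z * U z ≤ 2 * lam := by
    intro z hz
    have hφ0i : IntegrableOn
        (fun x : ℝ => (0:ℝ) * x ^ ((0:ℝ)-1) * (τ x * U x)
          + x ^ (0:ℝ) * (2 * I x - (a * β x + lam) * U x)) (Ioi 0) volume := by
      refine hDi.congr (Eventually.of_forall fun x => ?_)
      show 2 * I x - (a * β x + lam) * U x
        = (0:ℝ) * x ^ ((0:ℝ)-1) * (τ x * U x) + x ^ (0:ℝ) * (2 * I x - (a * β x + lam) * U x)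
      rw [Real.rpow_zero]
      ring
    have h2I_int : IntegrableOn (fun x => 2 * I x) (Ioi 0) volume := hI_int.const_mul 2
    have hbd : ∀ u, u ∈ Ioo (0:ℝ) z →
        z ^ (0:ℝ) * (τ z * U z) - 2 * lam ≤ u ^ (0:ℝ) * (τ u * U u) := by
      intro u hu
      have hsub : uIcc u z ⊆ Ioi (0:ℝ) := by
        rw [uIcc_of_le hu.2.le]
        exact fun x hx => lt_of_lt_of_le hu.1 hx.1
      have hid := hFTC0' u z hu.1 hu.2.le
      have hmono : (∫ t in u..z,
          ((0:ℝ) * t ^ ((0:ℝ)-1) * (τ t * U t) + t ^ (0:ℝ) * (2 * I t - (a * β t + lam) * U t)))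
          ≤ ∫ t in u..z, 2 * I t := by
        refine intervalIntegral.integral_mono_on hu.2.le
          ((hφ0i.mono_set hsub).intervalIntegrable)
          ((h2I_int.mono_set hsub).intervalIntegrable) ?_
        intro x hx
        have hx0 : 0 < x := lt_of_lt_of_le hu.1 hx.1
        have h1 : 0 ≤ (a * β x + lam) * U x :=
          mul_nonneg (add_nonneg (mul_nonneg ha.le (hβ0 x hx0)) hlam.le) (hUpos x hx0).le
        show (0:ℝ) * x ^ ((0:ℝ)-1) * (τ x * U x)
            + x ^ (0:ℝ) * (2 * I x - (a * β x + lam) * U x) ≤ 2 * I x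
        rw [Real.rpow_zero, zero_mul, zero_mul, zero_add, one_mul]
        linarith
      have hIval : (∫ t in u..z, 2 * I t) ≤ 2 * lam := by
        rw [intervalIntegral.integral_of_le hu.2.le]
        have hs : (∫ t in Ioc u z, 2 * I t) ≤ ∫ t in Ioi 0, 2 * I t := by
          refine setIntegral_mono_set h2I_int
            (Eventually.of_forall fun x => mul_nonneg (by norm_num) (hI0 x)) ?_
          exact HasSubset.Subset.eventuallyLE (fun x hx => lt_of_lt_of_le hu.1 hx.1.le)
        calc (∫ t in Ioc u z, 2 * I t) ≤ ∫ t in Ioi 0, 2 * I t := hs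
          _ = 2 * ∫ t in Ioi 0, I t := integral_const_mul 2 I
          _ = 2 * lam := by rw [h_int_I, ← hlam_eq]
      linarith [hid.symm.trans_le (le_trans hmono hIval)]
    have hev : ∀ᶠ u in nhdsWithin 0 (Ioi 0),
        z ^ (0:ℝ) * (τ z * U z) - 2 * lam ≤ u ^ (0:ℝ) * (τ u * U u) := by
      filter_upwards [Ioo_mem_nhdsGT_of_mem (⟨le_refl 0, hz⟩ : (0:ℝ) ∈ Ico 0 z)] with u hu
      exact hbd u hu
    have hle := ge_of_tendsto (sol.lim_zero 0 le_rfl) hev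
    rw [Real.rpow_zero, one_mul] at hle
    linarith
  -- q = p consequence
  have hτUq_int : IntegrableOn (fun x => x ^ (p-1) * (τ x * U x)) (Ioi 0) volume :=
    sol.int_tauU (p-1) (by linarith)
  have hmom : lam * (∫ x in Ioi (0:ℝ), x ^ p * U x)
      ≤ p * ∫ x in Ioi (0:ℝ), x ^ (p-1) * (τ x * U x) := by
    have hintp1 : IntegrableOn (fun x => p * x ^ (p-1) * (τ x * U x)) (Ioi 0) volume := by
      refine (hτUq_int.const_mul p).congr (Eventually.of_forall fun x => ?_)
      ring
    obtain ⟨hFTCp, -⟩ := hFTC p hp0 hintp1 hxpI_int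
    have e : (fun x : ℝ => p * x ^ (p-1) * (τ x * U x) + x ^ p * (2 * I x - (a * β x + lam) * U x))
        = fun x => p * x ^ (p-1) * (τ x * U x)
          + (2 * (x ^ p * I x) - (x ^ p * (a * β x * U x) + lam * (x ^ p * U x))) := by
      funext x
      set t := x ^ p
      set s := x ^ (p-1)
      ring
    have hg₂ : IntegrableOn
        (fun x => 2 * (x ^ p * I x) - (x ^ p * (a * β x * U x) + lam * (x ^ p * U x)))
        (Ioi 0) volume :=
      (hxpI_int.const_mul 2).sub (hβUp_int.add ((sol.int_U p hp0).const_mul lam))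
    have hg₃ : IntegrableOn (fun x => x ^ p * (a * β x * U x) + lam * (x ^ p * U x))
        (Ioi 0) volume := hβUp_int.add ((sol.int_U p hp0).const_mul lam)
    rw [e, integral_add hintp1 hg₂,
      integral_sub (hxpI_int.const_mul 2) hg₃,
      integral_add hβUp_int ((sol.int_U p hp0).const_mul lam), integral_const_mul,
      integral_const_mul] at hFTCp
    have hQ : (∫ x in Ioi (0:ℝ), p * x ^ (p-1) * (τ x * U x))
        = p * ∫ x in Ioi 0, x ^ (p-1) * (τ x * U x) := by
      rw [← integral_const_mul]
      refine setIntegral_congr_fun measurableSet_Ioi fun x _ => ?_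
      ring
    rw [hQ] at hFTCp
    linarith [h2I]
  -- assemble
  set M := ∫ x in Ioi (0:ℝ), x ^ p * U x with hMdef
  have hM0 : 0 ≤ M := setIntegral_nonneg measurableSet_Ioi fun x hx =>
    mul_nonneg (Real.rpow_nonneg (le_of_lt hx) p) (hUpos x hx).le
  have hApow : A ^ (p-1) * A = A ^ p := by
    have h := Real.rpow_add_one hA0.ne' (p-1)
    rw [show p - 1 + 1 = p by ring] at h
    exact h.symm
  have hT1split : (∫ x in Ioi (0:ℝ), x ^ (p-1) * (τ x * U x))
      = (∫ x in Ioc 0 A, x ^ (p-1) * (τ x * U x)) + ∫ x in Ioi A, x ^ (p-1) * (τ x * U x) := by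
    rw [← Ioc_union_Ioi_eq_Ioi hA0.le,
      setIntegral_union (Ioc_disjoint_Ioi le_rfl) measurableSet_Ioi
        (hτUq_int.mono_set Ioc_subset_Ioi_self) (hτUq_int.mono_set (Ioi_subset_Ioi hA0.le))]
  have hpart1 : (∫ x in Ioc (0:ℝ) A, x ^ (p-1) * (τ x * U x)) ≤ 2 * lam * A ^ p := by
    have hb : ∀ x ∈ Ioc (0:ℝ) A, x ^ (p-1) * (τ x * U x) ≤ A ^ (p-1) * (2 * lam) := by
      intro x hx
      exact mul_le_mul (Real.rpow_le_rpow hx.1.le hx.2 (by linarith)) (hg2lam x hx.1)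
        (mul_nonneg (hτ0 x hx.1) (hUpos x hx.1).le) (Real.rpow_nonneg hA0.le _)
    have hstep := setIntegral_mono_on (hτUq_int.mono_set Ioc_subset_Ioi_self)
      (integrableOn_const measure_Ioc_lt_top.ne) measurableSet_Ioc hb
    rw [setIntegral_const, Real.volume_real_Ioc_of_le hA0.le, sub_zero,
      smul_eq_mul] at hstep
    calc (∫ x in Ioc (0:ℝ) A, x ^ (p-1) * (τ x * U x)) ≤ A * (A ^ (p-1) * (2 * lam)) := hstep
      _ = 2 * lam * (A ^ (p-1) * A) := by ring
      _ = 2 * lam * A ^ p := by rw [hApow]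
  have hxpU_nonneg : 0 ≤ᵐ[volume.restrict (Ioi (0:ℝ))] fun x => x ^ p * U x := by
    filter_upwards [ae_restrict_mem measurableSet_Ioi] with x hx
    exact mul_nonneg (Real.rpow_nonneg hx.le p) (hUpos x hx).le
  have hpart2 : (∫ x in Ioi A, x ^ (p-1) * (τ x * U x)) ≤ ℓ * M := by
    have step1 : (∫ x in Ioi A, x ^ (p-1) * (τ x * U x)) ≤ ∫ x in Ioi A, ℓ * (x ^ p * U x) := by
      have hℓU_int : IntegrableOn (fun x => ℓ * (x ^ p * U x)) (Ioi 0) volume :=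
        (sol.int_U p hp0).const_mul ℓ
      refine setIntegral_mono_ae_restrict (hτUq_int.mono_set (Ioi_subset_Ioi hA0.le))
        (hℓU_int.mono_set (Ioi_subset_Ioi hA0.le)) ?_
      filter_upwards [ae_restrict_of_ae hτA, ae_restrict_mem measurableSet_Ioi] with x hτx hx
      have hx0 : (0:ℝ) < x := lt_trans hA0 hx
      have h1 : τ x ≤ ℓ * x := hτx hx.le
      have hxp : x ^ (p-1) * x = x ^ p := by
        have h := Real.rpow_add_one hx0.ne' (p-1)
        rw [show p - 1 + 1 = p by ring] at h
        exact h.symm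
      calc x ^ (p-1) * (τ x * U x) ≤ x ^ (p-1) * ((ℓ * x) * U x) :=
            mul_le_mul_of_nonneg_left
              (mul_le_mul_of_nonneg_right h1 (hUpos x hx0).le) (Real.rpow_nonneg hx0.le _)
        _ = ℓ * ((x ^ (p-1) * x) * U x) := by ring
        _ = ℓ * (x ^ p * U x) := by rw [hxp]
    have step3 : (∫ x in Ioi A, x ^ p * U x) ≤ M :=
      setIntegral_mono_set (sol.int_U p hp0) hxpU_nonneg
        (HasSubset.Subset.eventuallyLE (Ioi_subset_Ioi hA0.le))
    calc (∫ x in Ioi A, x ^ (p-1) * (τ x * U x)) ≤ ∫ x in Ioi A, ℓ * (x ^ p * U x) := step1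
      _ = ℓ * ∫ x in Ioi A, x ^ p * U x := integral_const_mul ℓ _
      _ ≤ ℓ * M := mul_le_mul_of_nonneg_left step3 hℓ0
  by_cases hcase : lam ≤ 2 * p * ℓ
  · exact le_trans hcase (le_max_left _ _)
  push_neg at hcase
  have hMbound : M ≤ 4 * p * A ^ p := by
    have key : lam * M ≤ p * (2 * lam * A ^ p + ℓ * M) := by
      calc lam * M ≤ p * ∫ x in Ioi (0:ℝ), x ^ (p-1) * (τ x * U x) := hmom
        _ = p * ((∫ x in Ioc 0 A, x ^ (p-1) * (τ x * U x))
            + ∫ x in Ioi A, x ^ (p-1) * (τ x * U x)) := by rw [hT1split]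
        _ ≤ p * (2 * lam * A ^ p + ℓ * M) :=
            mul_le_mul_of_nonneg_left (add_le_add hpart1 hpart2) hp0
    have h5 : p * ℓ * M ≤ (lam / 2) * M :=
      mul_le_mul_of_nonneg_right (by linarith) hM0
    have h6 : lam * (M / 2) ≤ lam * (2 * p * A ^ p) := by nlinarith
    have h7 : M / 2 ≤ 2 * p * A ^ p := le_of_mul_le_mul_left h6 hlam
    linarith
  have hB0 : (0:ℝ) < B := by linarith
  have hfin : lam ≤ a * (C₃ + C₂ * (4 * p * A ^ p)) := by
    have hBsplit : (∫ x in Ioi (0:ℝ), a * β x * U x)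
        = (∫ x in Ioc 0 B, a * β x * U x) + ∫ x in Ioi B, a * β x * U x := by
      rw [← Ioc_union_Ioi_eq_Ioi hB0.le,
        setIntegral_union (Ioc_disjoint_Ioi le_rfl) measurableSet_Ioi
          (hβU_int.mono_set Ioc_subset_Ioi_self) (hβU_int.mono_set (Ioi_subset_Ioi hB0.le))]
    have hb1 : (∫ x in Ioc (0:ℝ) B, a * β x * U x) ≤ a * C₃ := by
      have step : (∫ x in Ioc (0:ℝ) B, a * β x * U x) ≤ ∫ x in Ioc (0:ℝ) B, a * C₃ * U x := by
        have hC₃U_int : IntegrableOn (fun x => a * C₃ * U x) (Ioi 0) volume :=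
          hU_int.const_mul (a * C₃)
        refine setIntegral_mono_ae_restrict (hβU_int.mono_set Ioc_subset_Ioi_self)
          (hC₃U_int.mono_set Ioc_subset_Ioi_self) ?_
        filter_upwards [hβsmall, ae_restrict_mem measurableSet_Ioc] with x hβx hx
        have hU0 := (hUpos x hx.1).le
        linarith [mul_nonneg (mul_nonneg ha.le (sub_nonneg.2 hβx)) hU0]
      have step3 : (∫ x in Ioc (0:ℝ) B, U x) ≤ ∫ x in Ioi 0, U x := by
        refine setIntegral_mono_set hU_int ?_ (HasSubset.Subset.eventuallyLE Ioc_subset_Ioi_self)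
        filter_upwards [ae_restrict_mem measurableSet_Ioi] with x hx
        exact (hUpos x hx).le
      rw [sol.normalized] at step3
      calc (∫ x in Ioc (0:ℝ) B, a * β x * U x) ≤ ∫ x in Ioc (0:ℝ) B, a * C₃ * U x := step
        _ = (a * C₃) * ∫ x in Ioc (0:ℝ) B, U x := integral_const_mul _ _
        _ ≤ (a * C₃) * 1 := mul_le_mul_of_nonneg_left step3 (mul_nonneg ha.le hC₃)
        _ = a * C₃ := mul_one _
    have hb2 : (∫ x in Ioi B, a * β x * U x) ≤ a * (C₂ * (4 * p * A ^ p)) := by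
      have step : (∫ x in Ioi B, a * β x * U x) ≤ ∫ x in Ioi B, (a * C₂) * (x ^ p * U x) := by
        have haC₂_int : IntegrableOn (fun x => (a * C₂) * (x ^ p * U x)) (Ioi 0) volume :=
          (sol.int_U p hp0).const_mul (a * C₂)
        refine setIntegral_mono_on (hβU_int.mono_set (Ioi_subset_Ioi hB0.le))
          (haC₂_int.mono_set (Ioi_subset_Ioi hB0.le))
          measurableSet_Ioi ?_
        intro x hx
        have hx0 : (0:ℝ) < x := lt_trans hB0 hx
        have h1 : β x ≤ C₂ * x ^ p := hβB x (le_of_lt hx)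
        have hU0 := (hUpos x hx0).le
        linarith [mul_nonneg (mul_nonneg ha.le (sub_nonneg.2 h1)) hU0]
      have step3 : (∫ x in Ioi B, x ^ p * U x) ≤ M :=
        setIntegral_mono_set (sol.int_U p hp0) hxpU_nonneg
          (HasSubset.Subset.eventuallyLE (Ioi_subset_Ioi hB0.le))
      calc (∫ x in Ioi B, a * β x * U x) ≤ ∫ x in Ioi B, (a * C₂) * (x ^ p * U x) := step
        _ = (a * C₂) * ∫ x in Ioi B, x ^ p * U x := integral_const_mul _ _
        _ ≤ (a * C₂) * (4 * p * A ^ p) := by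
            refine mul_le_mul_of_nonneg_left (le_trans step3 hMbound) (mul_nonneg ha.le hC₂)
        _ = a * (C₂ * (4 * p * A ^ p)) := by ring
    calc lam = ∫ x in Ioi (0:ℝ), a * β x * U x := hlam_eq
      _ = (∫ x in Ioc 0 B, a * β x * U x) + ∫ x in Ioi B, a * β x * U x := hBsplit
      _ ≤ a * C₃ + a * (C₂ * (4 * p * A ^ p)) := add_le_add hb1 hb2
      _ = a * (C₃ + C₂ * (4 * p * A ^ p)) := by ring
  exact le_trans hfin (le_max_right _ _)

end
/-- Fragmentation dependency, vanishing fragmentation: if `β` is locally essentially bounded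
on `[0,∞)`, then there is `r > 0` with
`limsup_{a→0⁺} Λ_a ≤ r · ess limsup_{x→∞} τ(x)/x` (in `[0,+∞]`). -/
theorem fragmentation_dependency_vanishing
    (τ β : ℝ → ℝ) (κ : ℝ → ℝ → ℝ)
    (hsa : StandingAssumptions τ β κ)
    (hβloc : ∀ A : ℝ, 0 < A → ∃ C : ℝ, ∀ᵐ x ∂(volume.restrict (Ioc (0:ℝ) A)), β x ≤ C)
    (Lam : ℝ → ℝ) (W : ℝ → ℝ → ℝ)
    (hsol : ∀ a : ℝ, 0 < a → EigenSolution τ (fun x => a * β x) κ (Lam a) (W a)) :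
    ∃ r : ℝ, 0 < r ∧
      Filter.limsup (fun a => ENNReal.ofReal (Lam a)) (nhdsWithin 0 (Ioi 0)) ≤
        ENNReal.ofReal r *
          Filter.limsup (fun x => ENNReal.ofReal (τ x / x))
            (ae (volume : Measure ℝ) ⊓ atTop) := by
  obtain ⟨c, hc, hcsec⟩ := hsa.kernel.second
  have hc0 : 0 ≤ c :=
    le_trans (setIntegral_nonneg measurableSet_Ioc fun x _ =>
      mul_nonneg (sq_nonneg _) (hsa.kernel.nonneg x 1)) (hcsec 1 one_pos)
  obtain ⟨μ, hμ0, ⟨C, hCev⟩, -⟩ := hsa.β_poly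
  set p : ℝ := max 2 μ with hpdef
  have hp2 : 2 ≤ p := le_max_left _ _
  have hpμ : μ ≤ p := le_max_right _ _
  refine ⟨2 * p, by linarith, ?_⟩
  obtain ⟨B₀, hB₀⟩ := eventually_atTop.mp hCev
  set B : ℝ := max B₀ 1 with hBdef
  have hB1 : (1:ℝ) ≤ B := le_max_right _ _
  set C₂ : ℝ := max C 0 with hC₂def
  have hC₂0 : (0:ℝ) ≤ C₂ := le_max_right _ _
  have hβB : ∀ x : ℝ, B ≤ x → β x ≤ C₂ * x ^ p := by
    intro x hx
    have hx1 : (1:ℝ) ≤ x := le_trans hB1 hx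
    have h1 : β x ≤ C * x ^ μ := hB₀ x (le_trans (le_max_left _ _) hx)
    have h2 : C * x ^ μ ≤ C₂ * x ^ μ :=
      mul_le_mul_of_nonneg_right (le_max_left _ _) (Real.rpow_nonneg (by linarith) μ)
    have h3 : C₂ * x ^ μ ≤ C₂ * x ^ p :=
      mul_le_mul_of_nonneg_left (Real.rpow_le_rpow_of_exponent_le hx1 hpμ) hC₂0
    linarith
  obtain ⟨C₃', hC₃'⟩ := hβloc B (by linarith)
  set C₃ : ℝ := max C₃' 0 with hC₃def
  have hC₃0 : (0:ℝ) ≤ C₃ := le_max_right _ _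
  have hβsmall : ∀ᵐ x ∂(volume.restrict (Ioc (0:ℝ) B)), β x ≤ C₃ :=
    hC₃'.mono fun x hx => le_trans hx (le_max_left _ _)
  set Lτ := Filter.limsup (fun x => ENNReal.ofReal (τ x / x))
    (ae (volume : Measure ℝ) ⊓ atTop) with hLτdef
  have hcE0 : ENNReal.ofReal (2 * p) ≠ 0 := by
    rw [Ne, ENNReal.ofReal_eq_zero, not_le]
    linarith
  by_cases htop : Lτ = ⊤
  · rw [htop, ENNReal.mul_top hcE0]
    exact le_top
  have hmain : ∀ b : ENNReal, Lτ < b → b ≠ ⊤ →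
      Filter.limsup (fun a => ENNReal.ofReal (Lam a)) (nhdsWithin 0 (Ioi 0))
        ≤ ENNReal.ofReal (2 * p) * b := by
    intro b hb hbne
    have hev : ∀ᶠ x in (ae (volume : Measure ℝ) ⊓ atTop), ENNReal.ofReal (τ x / x) < b :=
      Filter.eventually_lt_of_limsup_lt hb
    obtain ⟨s, hs, t, ht, hst⟩ := Filter.mem_inf_iff_superset.mp hev
    obtain ⟨A₀, hA₀⟩ := mem_atTop_sets.mp ht
    set ℓ : ℝ := b.toReal with hℓdef
    have hℓ0 : 0 ≤ ℓ := ENNReal.toReal_nonneg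
    set A : ℝ := max A₀ 1 with hAdef
    have hA1 : (1:ℝ) ≤ A := le_max_right _ _
    have hs' : ∀ᵐ x ∂(volume : Measure ℝ), x ∈ s := hs
    have hτA : ∀ᵐ x ∂(volume : Measure ℝ), A ≤ x → τ x ≤ ℓ * x := by
      filter_upwards [hs'] with x hxs hAx
      have hx0 : (0:ℝ) < x := lt_of_lt_of_le one_pos (le_trans hA1 hAx)
      have hxt : x ∈ t := hA₀ x (le_trans (le_max_left _ _) hAx)
      have hlt : ENNReal.ofReal (τ x / x) < b := hst ⟨hxs, hxt⟩
      have hdiv : τ x / x < ℓ := by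
        have h0 : 0 ≤ τ x / x := div_nonneg (hsa.τ_nonneg x hx0) hx0.le
        exact (ENNReal.ofReal_lt_iff_lt_toReal h0 hbne).mp hlt
      calc τ x = (τ x / x) * x := by field_simp
        _ ≤ ℓ * x := mul_le_mul_of_nonneg_right hdiv.le hx0.le
    set K : ℝ := C₃ + C₂ * (4 * p * A ^ p) with hKdef
    have hK0 : 0 ≤ K := by
      have : (0:ℝ) ≤ A ^ p := Real.rpow_nonneg (by linarith) p
      have : (0:ℝ) ≤ 4 * p * A ^ p := by nlinarith
      nlinarith
    have hkey : ∀ a : ℝ, 0 < a → Lam a ≤ max (2 * p * ℓ) (a * K) := by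
      intro a ha
      exact eigen_key τ β κ hsa.τ_nonneg hsa.β_nonneg hsa.kernel.meas hsa.kernel.nonneg
        hsa.kernel.supp hsa.kernel.mass c hc.le hc0 hcsec a (Lam a) ha (W a) (hsol a ha)
        p hp2 A ℓ hA1 hℓ0 hτA B C₂ C₃ hB1 hC₂0 hC₃0 hβB hβsmall
    have hls : ∀ ε : ℝ, 0 < ε →
        Filter.limsup (fun a => ENNReal.ofReal (Lam a)) (nhdsWithin 0 (Ioi 0))
          ≤ ENNReal.ofReal (2 * p * ℓ + ε) := by
      intro ε hε
      refine Filter.limsup_le_of_le (by isBoundedDefault) ?_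
      have hδ : (0:ℝ) < ε / (K + 1) := by positivity
      filter_upwards [Ioo_mem_nhdsGT_of_mem (⟨le_refl 0, hδ⟩ : (0:ℝ) ∈ Ico 0 (ε/(K+1)))]
        with a haa
      refine ENNReal.ofReal_le_ofReal ?_
      have h1 := hkey a haa.1
      have h2 : a * K ≤ ε := by
        calc a * K ≤ (ε / (K + 1)) * K := mul_le_mul_of_nonneg_right haa.2.le hK0
          _ ≤ ε := by
            rw [div_mul_eq_mul_div, div_le_iff₀ (by linarith)]
            nlinarith
      have h2pℓ : 0 ≤ 2 * p * ℓ := by nlinarith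
      calc Lam a ≤ max (2 * p * ℓ) (a * K) := h1
        _ ≤ 2 * p * ℓ + ε := max_le (by linarith) (by linarith)
    have hfin : Filter.limsup (fun a => ENNReal.ofReal (Lam a)) (nhdsWithin 0 (Ioi 0))
        ≤ ENNReal.ofReal (2 * p * ℓ) := by
      refine ENNReal.le_of_forall_pos_le_add fun ε hε _ => ?_
      have hεR : (0:ℝ) < (ε:ℝ) := hε
      calc Filter.limsup (fun a => ENNReal.ofReal (Lam a)) (nhdsWithin 0 (Ioi 0))
          ≤ ENNReal.ofReal (2 * p * ℓ + ε) := hls ε hεR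
        _ = ENNReal.ofReal (2 * p * ℓ) + ENNReal.ofReal (ε:ℝ) :=
            ENNReal.ofReal_add (by nlinarith) (le_of_lt hεR)
        _ = ENNReal.ofReal (2 * p * ℓ) + ε := by rw [ENNReal.ofReal_coe_nnreal]
    calc Filter.limsup (fun a => ENNReal.ofReal (Lam a)) (nhdsWithin 0 (Ioi 0))
        ≤ ENNReal.ofReal (2 * p * ℓ) := hfin
      _ = ENNReal.ofReal (2 * p) * ENNReal.ofReal ℓ := ENNReal.ofReal_mul (by linarith)
      _ = ENNReal.ofReal (2 * p) * b := by rw [hℓdef, ENNReal.ofReal_toReal hbne]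
  refine ENNReal.le_of_forall_pos_le_add fun ε hε hlt => ?_
  have hcT : ENNReal.ofReal (2 * p) ≠ ⊤ := ENNReal.ofReal_ne_top
  have hεc : (ε : ENNReal) / ENNReal.ofReal (2 * p) ≠ 0 := by
    rw [Ne, ENNReal.div_eq_zero_iff]
    push_neg
    exact ⟨by exact_mod_cast hε.ne', hcT⟩
  have hb : Lτ < Lτ + (ε : ENNReal) / ENNReal.ofReal (2 * p) :=
    ENNReal.lt_add_right htop hεc
  have hbne : Lτ + (ε : ENNReal) / ENNReal.ofReal (2 * p) ≠ ⊤ :=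
    ENNReal.add_ne_top.2 ⟨htop, (ENNReal.div_lt_top ENNReal.coe_ne_top hcE0).ne⟩
  calc Filter.limsup (fun a => ENNReal.ofReal (Lam a)) (nhdsWithin 0 (Ioi 0))
      ≤ ENNReal.ofReal (2 * p) * (Lτ + (ε : ENNReal) / ENNReal.ofReal (2 * p)) :=
        hmain _ hb hbne
    _ = ENNReal.ofReal (2 * p) * Lτ
        + ENNReal.ofReal (2 * p) * ((ε : ENNReal) / ENNReal.ofReal (2 * p)) := by
        rw [mul_add]
    _ = ENNReal.ofReal (2 * p) * Lτ + ε := by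
        rw [ENNReal.mul_div_cancel hcE0 hcT]
end

section
/- (Fragmentation dependency, exploding fragmentation.) Assume the standing assumptions, that the essential liminf of β(x) as x → +∞ is positive, and that 1/τ is integrable on (0,a) for some a > 0. For each a > 0 let (Λ_a, Û_a) be a solution of the eigenproblem for (τ, aβ, κ). Then Λ_a → +∞ as a → +∞; more precisely, for every ε > 0 with I_ε := ∫_0^ε dx/τ(x) < ∞, liminf_{a→+∞} Λ_a ≥ 1/(2 I_ε). -/
open MeasureTheory Filter Set Topology

private lemma cobdd {u : ℝ → ENNReal} {l : Filter ℝ} : Filter.IsCoboundedUnder (· ≥ ·) l u :=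
  ⟨⊤, fun _ _ => le_top⟩

private lemma eigen_key_s16 {τ b : ℝ → ℝ} {κ : ℝ → ℝ → ℝ} {lam : ℝ} {U : ℝ → ℝ}
    (sol : EigenSolution τ b κ lam U)
    (hκmeas : Measurable (Function.uncurry κ))
    (hκnn : ∀ x y, 0 ≤ κ x y)
    (hbnn : ∀ x : ℝ, 0 < x → 0 ≤ b x)
    (hmass : ∀ y : ℝ, 0 < y → (∫ x in Ioc (0:ℝ) y, κ x y) = 1) :
    lam = (∫ x in Ioi (0:ℝ), b x * U x) ∧ ∀ x : ℝ, 0 < x → τ x * U x ≤ 2 * lam := by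
  -- basic integrabilities
  have hUint : IntegrableOn U (Ioi 0) volume := by
    have := sol.int_U 0 le_rfl
    simpa [Real.rpow_zero] using this
  have hbUint : IntegrableOn (fun x => b x * U x) (Ioi 0) volume := by
    have := sol.int_betaU 0 le_rfl
    simpa [Real.rpow_zero] using this
  have hbUnn : ∀ᵐ x ∂(volume.restrict (Ioi (0:ℝ))), 0 ≤ b x * U x := by
    filter_upwards [ae_restrict_mem measurableSet_Ioi] with x hx
    exact mul_nonneg (hbnn x hx) (sol.U_pos x hx).le
  -- measurable nonneg modification h of b*U
  obtain ⟨h0, h0meas, h0eq⟩ := hbUint.aestronglyMeasurable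
  set h : ℝ → ℝ := fun y => max (h0 y) 0 with hh
  have hmeas : Measurable h := h0meas.measurable.max measurable_const
  have hnn : ∀ y, 0 ≤ h y := fun y => le_max_right _ _
  have heq : ∀ᵐ y ∂(volume.restrict (Ioi (0:ℝ))), h y = b y * U y := by
    filter_upwards [h0eq, hbUnn] with y hy hy'
    simp only [hh, ← hy]
    exact max_eq_left hy'
  -- ENNReal kernel function
  set F : ℝ → ℝ → ENNReal := fun x y => if x < y then ENNReal.ofReal (h y * κ x y) else 0 with hF
  have hFmeas : Measurable (Function.uncurry F) := by
    refine Measurable.ite (measurableSet_lt measurable_fst measurable_snd) ?_ measurable_const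
    exact ((hmeas.comp measurable_snd).mul hκmeas).ennreal_ofReal
  set L : ℝ → ENNReal := fun x => ∫⁻ y, F x y with hL
  have hLmeas : Measurable L := Measurable.lintegral_prod_right' hFmeas
  have hLx : ∀ x : ℝ, L x = ∫⁻ y in Ioi x, ENNReal.ofReal (h y * κ x y) := by
    intro x
    have hfy : ∀ y, F x y = (Ioi x).indicator (fun y => ENNReal.ofReal (h y * κ x y)) y := by
      intro y
      by_cases hxy : x < y
      · simp [hF, hxy, indicator_of_mem, mem_Ioi]
      · simp [hF, hxy, indicator_of_notMem, mem_Ioi]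
    rw [hL]
    simp only
    rw [lintegral_congr hfy, lintegral_indicator measurableSet_Ioi]
  set G : ℝ → ℝ := fun x => ∫ y in Ioi x, b y * κ x y * U y with hG
  have hae : ∀ x : ℝ, 0 ≤ x → ∀ᵐ y ∂(volume.restrict (Ioi x)), h y = b y * U y :=
    fun x hx => ae_restrict_of_ae_restrict_of_subset (Ioi_subset_Ioi hx) heq
  have hGL : ∀ x : ℝ, 0 ≤ x → G x = (L x).toReal := by
    intro x hx
    have h1 : G x = ∫ y in Ioi x, h y * κ x y := by
      refine integral_congr_ae ?_
      filter_upwards [hae x hx] with y hy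
      rw [hy]; ring
    rw [h1, integral_eq_lintegral_of_nonneg_ae
      (ae_of_all _ fun y => mul_nonneg (hnn y) (hκnn x y))
      ((hmeas.mul hκmeas.of_uncurry_left).aestronglyMeasurable), hLx x]
  set B : ℝ := ∫ x in Ioi (0:ℝ), b x * U x with hB
  have hBnn : 0 ≤ B :=
    setIntegral_nonneg measurableSet_Ioi (fun x hx => mul_nonneg (hbnn x hx) (sol.U_pos x hx).le)
  have hLtot : ∫⁻ x in Ioi (0:ℝ), L x = ENNReal.ofReal B := by
    have hswap : ∫⁻ x in Ioi (0:ℝ), ∫⁻ y, F x y = ∫⁻ y, ∫⁻ x in Ioi (0:ℝ), F x y :=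
      lintegral_lintegral_swap hFmeas.aemeasurable
    have hinner : ∀ y : ℝ,
        (∫⁻ x in Ioi (0:ℝ), F x y) = (Ioi (0:ℝ)).indicator (fun y => ENNReal.ofReal (h y)) y := by
      intro y
      rcases le_or_gt y 0 with hy | hy
      · have hz : ∀ᵐ x ∂volume, x ∈ Ioi (0:ℝ) → F x y = 0 := by
          refine ae_of_all _ fun x hx => ?_
          have : ¬ x < y := not_lt.mpr (hy.trans hx.le)
          simp [hF, this]
        rw [setLIntegral_congr_fun_ae measurableSet_Ioi hz]
        simp [indicator_of_notMem, not_lt.mpr hy]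
      · have hκint : IntegrableOn (fun x => κ x y) (Ioc (0:ℝ) y) volume := by
          by_contra hni
          have := hmass y hy
          rw [MeasureTheory.integral_undef hni] at this
          norm_num at this
        have hstep : ∀ᵐ x ∂volume, x ∈ Ioi (0:ℝ) →
            F x y = (Iio y).indicator (fun x => ENNReal.ofReal (h y) * ENNReal.ofReal (κ x y)) x := by
          refine ae_of_all _ fun x _ => ?_
          by_cases hxy : x < y
          · simp [hF, hxy, indicator_of_mem, mem_Iio, ENNReal.ofReal_mul (hnn y)]
          · simp [hF, hxy, indicator_of_notMem, mem_Iio]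
        rw [setLIntegral_congr_fun_ae measurableSet_Ioi hstep,
          lintegral_indicator measurableSet_Iio, Measure.restrict_restrict measurableSet_Iio]
        have hset : Iio y ∩ Ioi (0:ℝ) = Ioo 0 y := by ext z; simp [mem_Ioo, and_comm]
        rw [hset, lintegral_const_mul _ hκmeas.of_uncurry_right.ennreal_ofReal]
        have hone : ∫⁻ x in Ioo (0:ℝ) y, ENNReal.ofReal (κ x y) = 1 := by
          rw [setLIntegral_congr Ioo_ae_eq_Ioc,
            ← ofReal_integral_eq_lintegral_ofReal hκint (ae_of_all _ fun x => hκnn x y),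
            hmass y hy, ENNReal.ofReal_one]
        rw [hone, mul_one]
        simp [indicator_of_mem, mem_Ioi.mpr hy]
    calc ∫⁻ x in Ioi (0:ℝ), L x
        = ∫⁻ y, ∫⁻ x in Ioi (0:ℝ), F x y := hswap
      _ = ∫⁻ y, (Ioi (0:ℝ)).indicator (fun y => ENNReal.ofReal (h y)) y := lintegral_congr hinner
      _ = ∫⁻ y in Ioi (0:ℝ), ENNReal.ofReal (h y) := lintegral_indicator measurableSet_Ioi _
      _ = ∫⁻ y in Ioi (0:ℝ), ENNReal.ofReal (b y * U y) := by
          refine lintegral_congr_ae ?_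
          filter_upwards [heq] with y hy
          rw [hy]
      _ = ENNReal.ofReal B := (ofReal_integral_eq_lintegral_ofReal hbUint hbUnn).symm
  have hLne : ∫⁻ x in Ioi (0:ℝ), L x ≠ ⊤ := by rw [hLtot]; exact ENNReal.ofReal_ne_top
  have hGint : IntegrableOn G (Ioi 0) volume := by
    have hint : Integrable (fun x => (L x).toReal) (volume.restrict (Ioi 0)) :=
      integrable_toReal_of_lintegral_ne_top hLmeas.aemeasurable hLne
    refine hint.congr ?_
    filter_upwards [ae_restrict_mem measurableSet_Ioi] with x hx
    exact (hGL x hx.le).symm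
  have hGeq : ∫ x in Ioi (0:ℝ), G x = B := by
    have h1 : ∫ x in Ioi (0:ℝ), G x = ∫ x in Ioi (0:ℝ), (L x).toReal := by
      refine integral_congr_ae ?_
      filter_upwards [ae_restrict_mem measurableSet_Ioi] with x hx
      exact hGL x hx.le
    rw [h1, integral_toReal hLmeas.aemeasurable (ae_lt_top' hLmeas.aemeasurable hLne), hLtot,
      ENNReal.toReal_ofReal hBnn]
  have hGnn : ∀ x : ℝ, 0 < x → 0 ≤ G x := fun x hx =>
    setIntegral_nonneg measurableSet_Ioi (fun y hy =>
      mul_nonneg (mul_nonneg (hbnn y (hx.trans hy)) (hκnn x y)) (sol.U_pos y (hx.trans hy)).le)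
  -- the derivative function
  set g : ℝ → ℝ := fun x => 2 * G x - (b x + lam) * U x with hg
  have hderiv : ∀ x : ℝ, 0 < x → HasDerivAt (fun y => τ y * U y) (g x) x := sol.eqn
  have hblamU : IntegrableOn (fun x => (b x + lam) * U x) (Ioi 0) volume :=
    (hbUint.add (hUint.const_mul lam)).congr (ae_of_all _ fun x => by simp only [Pi.add_apply]; ring)
  have hgint : IntegrableOn g (Ioi 0) volume := (hGint.const_mul 2).sub hblamU
  have hFTC : ∀ s t : ℝ, 0 < s → s ≤ t → ∫ x in s..t, g x = τ t * U t - τ s * U s := by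
    intro s t hs hst
    refine intervalIntegral.integral_eq_sub_of_hasDerivAt (f := fun y => τ y * U y) ?_ ?_
    · intro x hx
      rw [uIcc_of_le hst] at hx
      exact hderiv x (hs.trans_le hx.1)
    · rw [intervalIntegrable_iff]
      refine hgint.mono_set fun z hz => ?_
      rw [uIoc_of_le hst] at hz
      exact hs.trans hz.1
  have hτUtop : Tendsto (fun x : ℝ => τ x * U x) atTop (nhds 0) := by
    have := sol.lim_top 0 le_rfl
    simpa [Real.rpow_zero] using this
  have hτU0 : Tendsto (fun x : ℝ => τ x * U x) (nhdsWithin 0 (Ioi 0)) (nhds 0) := by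
    have := sol.lim_zero 0 le_rfl
    simpa [Real.rpow_zero] using this
  have hIoi1 : ∫ x in Ioi (1:ℝ), g x = - (τ 1 * U 1) := by
    have h1 : Tendsto (fun t : ℝ => ∫ x in (1:ℝ)..t, g x) atTop (nhds (∫ x in Ioi (1:ℝ), g x)) :=
      intervalIntegral_tendsto_integral_Ioi 1 (hgint.mono_set (Ioi_subset_Ioi zero_le_one)) tendsto_id
    have hev : (fun t : ℝ => τ t * U t - τ 1 * U 1) =ᶠ[atTop] fun t => ∫ x in (1:ℝ)..t, g x := by
      filter_upwards [eventually_ge_atTop (1:ℝ)] with t ht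
      exact (hFTC 1 t one_pos ht).symm
    have h2 : Tendsto (fun t : ℝ => ∫ x in (1:ℝ)..t, g x) atTop (nhds (0 - τ 1 * U 1)) :=
      Tendsto.congr' hev (hτUtop.sub_const _)
    have := tendsto_nhds_unique h1 h2
    rw [this]; ring
  have hIoc1 : ∫ x in Ioc (0:ℝ) 1, g x = τ 1 * U 1 := by
    set sq : ℕ → Set ℝ := fun n => Ioc (1/(n+1) : ℝ) 1 with hsq
    have hsm : ∀ n, MeasurableSet (sq n) := fun n => measurableSet_Ioc
    have hmono : Monotone sq := by
      intro m n hmn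
      refine Ioc_subset_Ioc_left (one_div_le_one_div_of_le (by positivity) ?_)
      have : (m:ℝ) ≤ n := by exact_mod_cast hmn
      linarith
    have hunion : (⋃ n, sq n) = Ioc (0:ℝ) 1 := by
      ext x
      simp only [mem_iUnion, hsq, mem_Ioc]
      constructor
      · rintro ⟨n, h1, h2⟩
        exact ⟨lt_trans (by positivity) h1, h2⟩
      · rintro ⟨hx0, hx1⟩
        obtain ⟨n, hn⟩ := exists_nat_gt (1/x)
        refine ⟨n, ?_, hx1⟩
        rw [div_lt_iff₀ (by positivity)]
        rw [div_lt_iff₀ hx0] at hn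
        nlinarith
    have htend := tendsto_setIntegral_of_monotone hsm hmono
      (by rw [hunion]; exact hgint.mono_set Ioc_subset_Ioi_self)
    rw [hunion] at htend
    have hval : ∀ n : ℕ, ∫ x in sq n, g x = τ 1 * U 1 - τ (1/(n+1)) * U (1/(n+1)) := by
      intro n
      have hpos : (0:ℝ) < 1/(n+1) := by positivity
      have hle : (1/(n+1):ℝ) ≤ 1 := by
        rw [div_le_one (by positivity)]
        simp [Nat.cast_nonneg]
      rw [hsq]
      simp only
      rw [← intervalIntegral.integral_of_le hle]
      exact hFTC _ 1 hpos hle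
    have hseq : Tendsto (fun n : ℕ => τ (1/(n+1) : ℝ) * U (1/(n+1) : ℝ)) atTop (nhds 0) := by
      refine hτU0.comp ?_
      rw [tendsto_nhdsWithin_iff]
      exact ⟨tendsto_one_div_add_atTop_nhds_zero_nat,
        Eventually.of_forall fun n => mem_Ioi.mpr (by positivity)⟩
    have h2 : Tendsto (fun n : ℕ => ∫ x in sq n, g x) atTop (nhds (τ 1 * U 1 - 0)) := by
      refine Tendsto.congr (fun n => (hval n).symm) ?_
      exact Tendsto.const_sub _ hseq
    have := tendsto_nhds_unique htend h2
    rw [this]; ring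
  have hgtot : ∫ x in Ioi (0:ℝ), g x = 0 := by
    have hsplit : ∫ x in Ioi (0:ℝ), g x = (∫ x in Ioc (0:ℝ) 1, g x) + ∫ x in Ioi (1:ℝ), g x := by
      rw [← setIntegral_union (Ioc_disjoint_Ioi le_rfl) measurableSet_Ioi
        (hgint.mono_set Ioc_subset_Ioi_self) (hgint.mono_set (Ioi_subset_Ioi zero_le_one)),
        Ioc_union_Ioi_eq_Ioi zero_le_one]
    rw [hsplit, hIoc1, hIoi1]; ring
  have hsum : ∫ x in Ioi (0:ℝ), (b x + lam) * U x = B + lam := by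
    rw [show (fun x => (b x + lam) * U x) = fun x => b x * U x + lam * U x from
      funext fun x => by ring]
    rw [integral_add hbUint (hUint.const_mul lam), integral_const_mul _ _, sol.normalized, hB]
    ring
  have hlam : lam = B := by
    have h1 : ∫ x in Ioi (0:ℝ), g x = 2 * B - (B + lam) := by
      rw [hg]
      rw [integral_sub (hGint.const_mul 2) hblamU, integral_const_mul _ _, hGeq, hsum]
    rw [hgtot] at h1
    linarith
  refine ⟨hlam, fun x hx => ?_⟩
  have key : ∀ s : ℝ, 0 < s → s ≤ x → τ x * U x ≤ τ s * U s + 2 * lam := by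
    intro s hs hsx
    have hii : ∀ f : ℝ → ℝ, IntegrableOn f (Ioi 0) volume → IntervalIntegrable f volume s x := by
      intro f hf
      rw [intervalIntegrable_iff]
      refine hf.mono_set fun z hz => ?_
      rw [uIoc_of_le hsx] at hz
      exact hs.trans hz.1
    have hmono1 : ∫ t in s..x, g t ≤ ∫ t in s..x, 2 * G t := by
      refine intervalIntegral.integral_mono_on hsx (hii _ hgint) (hii _ (hGint.const_mul 2)) ?_
      intro t ht
      have ht0 : 0 < t := hs.trans_le ht.1
      have hnn2 : 0 ≤ (b t + lam) * U t :=
        mul_nonneg (add_nonneg (hbnn t ht0) sol.lam_pos.le) (sol.U_pos t ht0).le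
      simp only [hg]
      linarith
    have hmono2 : ∫ t in s..x, 2 * G t ≤ 2 * lam := by
      rw [intervalIntegral.integral_of_le hsx]
      have hsub : ∫ t in Ioc s x, 2 * G t ≤ ∫ t in Ioi (0:ℝ), 2 * G t := by
        refine setIntegral_mono_set (hGint.const_mul 2) ?_ ?_
        · filter_upwards [ae_restrict_mem measurableSet_Ioi] with t ht
          have := hGnn t ht
          show (0:ℝ) ≤ 2 * G t
          linarith
        · exact HasSubset.Subset.eventuallyLE fun t ht => hs.trans ht.1
      calc ∫ t in Ioc s x, 2 * G t ≤ ∫ t in Ioi (0:ℝ), 2 * G t := hsub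
        _ = 2 * lam := by rw [integral_const_mul _ _, hGeq, ← hlam]
    have hFTCs := hFTC s x hs hsx
    linarith
  have htend : Tendsto (fun s => τ s * U s + 2 * lam) (nhdsWithin 0 (Ioi 0))
      (nhds (0 + 2 * lam)) := hτU0.add_const _
  have hev : ∀ᶠ s in nhdsWithin 0 (Ioi 0), τ x * U x ≤ τ s * U s + 2 * lam := by
    filter_upwards [self_mem_nhdsWithin, mem_nhdsWithin_of_mem_nhds (Iio_mem_nhds hx)]
      with s hs1 hs2
    exact key s hs1 hs2.le
  have := ge_of_tendsto htend hev
  linarith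


private lemma tau_pos_ae {τ β : ℝ → ℝ} {κ : ℝ → ℝ → ℝ} (hsa : StandingAssumptions τ β κ)
    {ε : ℝ} (hε : 0 < ε) : ∀ᵐ x ∂(volume.restrict (Ioc 0 ε)), 0 < τ x := by
  have hcov : Ioc (0:ℝ) ε = ⋃ n : ℕ, Icc (ε/(n+1)) ε := by
    ext x
    simp only [mem_Ioc, mem_iUnion, mem_Icc]
    constructor
    · rintro ⟨hx0, hx1⟩
      obtain ⟨n, hn⟩ := exists_nat_gt (ε/x)
      refine ⟨n, ?_, hx1⟩
      rw [div_le_iff₀ (by positivity)]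
      rw [div_lt_iff₀ hx0] at hn
      nlinarith
    · rintro ⟨n, h1, h2⟩
      exact ⟨lt_of_lt_of_le (by positivity) h1, h2⟩
  rw [hcov, ae_restrict_iUnion_iff]
  intro n
  obtain ⟨m, hm, hmae⟩ := hsa.pos_on_compacts (Icc (ε/(n+1)) ε) isCompact_Icc
    (fun x hx => lt_of_lt_of_le (by positivity) hx.1)
  filter_upwards [hmae] with x hx
  exact lt_of_lt_of_le hm hx.1

private lemma beta_lower {τ β : ℝ → ℝ} {κ : ℝ → ℝ → ℝ} (hsa : StandingAssumptions τ β κ)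
    (hβpos : 0 < Filter.liminf (fun x => ENNReal.ofReal (β x))
        (ae (volume : Measure ℝ) ⊓ atTop))
    {ε : ℝ} (hε : 0 < ε) :
    ∃ c : ℝ, 0 < c ∧ ∀ᵐ x ∂(volume.restrict (Ioi ε)), c ≤ β x := by
  obtain ⟨c₀, hc₀0, hc₀⟩ := exists_between
    (lt_min hβpos (zero_lt_one : (0:ENNReal) < 1))
  have hlt : c₀ < Filter.liminf (fun x => ENNReal.ofReal (β x))
      (ae (volume : Measure ℝ) ⊓ atTop) := lt_of_lt_of_le hc₀ (min_le_left _ _)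
  have hc₀top : c₀ ≠ ⊤ :=
    ((lt_of_lt_of_le hc₀ (min_le_right _ _)).trans ENNReal.one_lt_top).ne
  have hev := Filter.eventually_lt_of_lt_liminf hlt
  rw [Filter.eventually_inf] at hev
  obtain ⟨s, hs, t, ht, hst⟩ := hev
  obtain ⟨R, hR⟩ := mem_atTop_sets.mp ht
  have hae1 : ∀ᵐ x ∂(volume : Measure ℝ), R ≤ x → c₀.toReal < β x := by
    have hsae : ∀ᵐ x ∂(volume : Measure ℝ), x ∈ s := hs
    filter_upwards [hsae] with x hxs hxR
    exact (ENNReal.lt_ofReal_iff_toReal_lt hc₀top).mp (hst x ⟨hxs, hR x hxR⟩)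
  set R' := max ε R with hR'
  obtain ⟨m, hm, hmae⟩ := hsa.pos_on_compacts (Icc ε R') isCompact_Icc
    (fun x hx => lt_of_lt_of_le hε hx.1)
  have hmae' : ∀ᵐ x ∂(volume : Measure ℝ), x ∈ Icc ε R' → m ≤ β x := by
    filter_upwards [(ae_restrict_iff' measurableSet_Icc).mp
      (hmae.mono fun x hx => hx.2)] with x hx hxK
    exact hx hxK
  refine ⟨min c₀.toReal m, lt_min (ENNReal.toReal_pos hc₀0.ne' hc₀top) hm, ?_⟩
  filter_upwards [ae_restrict_mem measurableSet_Ioi, ae_restrict_of_ae hae1,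
    ae_restrict_of_ae hmae'] with x hx h1 h2
  rcases le_or_gt x R' with hxR' | hxR'
  · exact le_trans (min_le_right _ _) (h2 ⟨hx.le, hxR'⟩)
  · exact le_trans (min_le_left _ _)
      (h1 (le_of_lt (lt_of_le_of_lt (le_max_right ε R) hxR'))).le

private lemma lam_lower {τ β : ℝ → ℝ} {κ : ℝ → ℝ → ℝ}
    (hsa : StandingAssumptions τ β κ)
    (hβpos : 0 < Filter.liminf (fun x => ENNReal.ofReal (β x))
        (ae (volume : Measure ℝ) ⊓ atTop))
    {Lam : ℝ → ℝ} {W : ℝ → ℝ → ℝ}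
    (hsol : ∀ a : ℝ, 0 < a → EigenSolution τ (fun x => a * β x) κ (Lam a) (W a))
    {ε : ℝ} (hε : 0 < ε)
    (hint : IntegrableOn (fun x => 1 / τ x) (Ioc 0 ε) volume) :
    ∃ c : ℝ, 0 < c ∧ ∀ a : ℝ, 0 < a →
      1 ≤ Lam a * (2 * (∫ x in Ioc (0:ℝ) ε, 1 / τ x) + 1 / (a * c)) := by
  obtain ⟨c, hc, hcae⟩ := beta_lower hsa hβpos hε
  refine ⟨c, hc, fun a ha => ?_⟩
  have sol := hsol a ha
  obtain ⟨hlam, hbd⟩ := eigen_key_s16 sol hsa.kernel.meas hsa.kernel.nonneg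
    (fun x hx => mul_nonneg ha.le (hsa.β_nonneg x hx)) hsa.kernel.mass
  set U := W a with hU
  set I : ℝ := ∫ x in Ioc (0:ℝ) ε, 1 / τ x with hI
  have hUint : IntegrableOn U (Ioi 0) volume := by
    have := sol.int_U 0 le_rfl
    simpa [Real.rpow_zero] using this
  have hbUint : IntegrableOn (fun x => (a * β x) * U x) (Ioi 0) volume := by
    have := sol.int_betaU 0 le_rfl
    simpa [Real.rpow_zero] using this
  have hU1 : ∫ x in Ioc (0:ℝ) ε, U x ≤ 2 * Lam a * I := by
    have hmono : ∫ x in Ioc (0:ℝ) ε, U x ≤ ∫ x in Ioc (0:ℝ) ε, 2 * Lam a * (1 / τ x) := by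
      refine integral_mono_ae (hUint.mono_set Ioc_subset_Ioi_self) (hint.const_mul _) ?_
      filter_upwards [tau_pos_ae hsa hε, ae_restrict_mem measurableSet_Ioc] with x hτ hx
      rw [mul_one_div, le_div_iff₀ hτ]
      have := hbd x hx.1
      nlinarith [mul_comm (U x) (τ x)]
    calc ∫ x in Ioc (0:ℝ) ε, U x ≤ _ := hmono
      _ = 2 * Lam a * I := by rw [integral_const_mul _ _]
  have hU2 : a * c * ∫ x in Ioi ε, U x ≤ Lam a := by
    have h1 : ∫ x in Ioi ε, a * c * U x ≤ ∫ x in Ioi ε, (a * β x) * U x := by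
      refine integral_mono_ae ((hUint.mono_set (Ioi_subset_Ioi hε.le)).const_mul _)
        (hbUint.mono_set (Ioi_subset_Ioi hε.le)) ?_
      filter_upwards [hcae, ae_restrict_mem measurableSet_Ioi] with x hcx hx
      have hU0 : 0 ≤ U x := (sol.U_pos x (hε.trans hx)).le
      have hmul := mul_le_mul_of_nonneg_right hcx hU0
      have := mul_le_mul_of_nonneg_left hmul ha.le
      nlinarith [this]
    have h2 : ∫ x in Ioi ε, (a * β x) * U x ≤ ∫ x in Ioi (0:ℝ), (a * β x) * U x := by
      refine setIntegral_mono_set hbUint ?_ ?_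
      · filter_upwards [ae_restrict_mem measurableSet_Ioi] with x hx
        exact mul_nonneg (mul_nonneg ha.le (hsa.β_nonneg x hx)) (sol.U_pos x hx).le
      · exact HasSubset.Subset.eventuallyLE (Ioi_subset_Ioi hε.le)
    calc a * c * ∫ x in Ioi ε, U x = ∫ x in Ioi ε, a * c * U x := (integral_const_mul _ _).symm
      _ ≤ ∫ x in Ioi ε, (a * β x) * U x := h1
      _ ≤ ∫ x in Ioi (0:ℝ), (a * β x) * U x := h2
      _ = Lam a := hlam.symm
  have hsplit : (∫ x in Ioc (0:ℝ) ε, U x) + (∫ x in Ioi ε, U x) = 1 := by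
    rw [← setIntegral_union (Ioc_disjoint_Ioi le_rfl) measurableSet_Ioi
      (hUint.mono_set Ioc_subset_Ioi_self) (hUint.mono_set (Ioi_subset_Ioi hε.le)),
      Ioc_union_Ioi_eq_Ioi hε.le, sol.normalized]
  have hac : 0 < a * c := mul_pos ha hc
  have hB : ∫ x in Ioi ε, U x ≤ Lam a / (a * c) := by
    rw [le_div_iff₀ hac]
    linarith [mul_comm (a*c) (∫ x in Ioi ε, U x), hU2]
  have hkey : Lam a * (2 * I + 1 / (a * c)) = 2 * Lam a * I + Lam a / (a * c) := by
    field_simp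
  rw [hkey]
  linarith

/-- Fragmentation dependency, exploding fragmentation: if `ess liminf_{x→∞} β(x) > 0` and
`1/τ` is integrable near `0`, then `Λ_a → +∞` as `a → +∞`; more precisely, for every
`ε > 0` with `I_ε = ∫_0^ε 1/τ < ∞`, `liminf_{a→∞} Λ_a ≥ 1/(2 I_ε)`. -/
theorem fragmentation_dependency_exploding
    (τ β : ℝ → ℝ) (κ : ℝ → ℝ → ℝ)
    (hsa : StandingAssumptions τ β κ)
    (hβpos : 0 < Filter.liminf (fun x => ENNReal.ofReal (β x))
        (ae (volume : Measure ℝ) ⊓ atTop))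
    (hτint : ∃ a : ℝ, 0 < a ∧ IntegrableOn (fun x => 1 / τ x) (Ioc 0 a) volume)
    (Lam : ℝ → ℝ) (W : ℝ → ℝ → ℝ)
    (hsol : ∀ a : ℝ, 0 < a → EigenSolution τ (fun x => a * β x) κ (Lam a) (W a)) :
    Tendsto Lam atTop atTop ∧
    ∀ ε : ℝ, 0 < ε → IntegrableOn (fun x => 1 / τ x) (Ioc 0 ε) volume →
      ENNReal.ofReal (1 / (2 * ∫ x in Ioc (0:ℝ) ε, 1 / τ x)) ≤
        Filter.liminf (fun a => ENNReal.ofReal (Lam a)) atTop := by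
  obtain ⟨a₀, ha₀, hτint₀⟩ := hτint
  have liminf_part : ∀ ε : ℝ, 0 < ε → IntegrableOn (fun x => 1 / τ x) (Ioc 0 ε) volume →
      ENNReal.ofReal (1 / (2 * ∫ x in Ioc (0:ℝ) ε, 1 / τ x)) ≤
        Filter.liminf (fun a => ENNReal.ofReal (Lam a)) atTop := by
    intro ε hε hεint
    set I : ℝ := ∫ x in Ioc (0:ℝ) ε, 1 / τ x with hI
    have hI0 : 0 ≤ I := setIntegral_nonneg measurableSet_Ioc
      (fun x hx => div_nonneg zero_le_one (hsa.τ_nonneg x hx.1))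
    rcases eq_or_lt_of_le hI0 with hI0' | hIpos
    · rw [← hI0']
      norm_num
    · obtain ⟨c, hc, hkey⟩ := lam_lower hsa hβpos hsol hε hεint
      have hstep : ∀ δ : ℝ, 0 < δ →
          ENNReal.ofReal (1/(2*I + δ)) ≤ Filter.liminf (fun a => ENNReal.ofReal (Lam a)) atTop := by
        intro δ hδ
        refine Filter.le_liminf_of_le cobdd ?_
        filter_upwards [eventually_ge_atTop (max 1 (1/(δ*c)))] with a ha
        have ha1 : (1:ℝ) ≤ a := le_trans (le_max_left _ _) ha
        have hapos : 0 < a := lt_of_lt_of_le one_pos ha1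
        have h1 := hkey a hapos
        rw [← hI] at h1
        have hac : 0 < a * c := mul_pos hapos hc
        have h2 : 1/(a*c) ≤ δ := by
          rw [div_le_iff₀ hac]
          have h3 : 1/(δ*c) ≤ a := le_trans (le_max_right _ _) ha
          rw [div_le_iff₀ (mul_pos hδ hc)] at h3
          nlinarith
        have h1ac : 0 < 1/(a*c) := by positivity
        have hXpos : 0 < 2*I + 1/(a*c) := by linarith
        have hL : 1/(2*I + 1/(a*c)) ≤ Lam a := (div_le_iff₀ hXpos).mpr h1
        have hmono : 1/(2*I+δ) ≤ 1/(2*I + 1/(a*c)) :=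
          one_div_le_one_div_of_le hXpos (by linarith)
        exact ENNReal.ofReal_le_ofReal (le_trans hmono hL)
      have htd : Tendsto (fun δ : ℝ => ENNReal.ofReal (1/(2*I+δ))) (nhdsWithin 0 (Ioi 0))
          (nhds (ENNReal.ofReal (1/(2*I)))) := by
        have h1 : Tendsto (fun δ : ℝ => 2*I+δ) (nhds 0) (nhds (2*I)) := by
          have h0 : Tendsto (fun δ : ℝ => δ) (nhds (0:ℝ)) (nhds 0) := tendsto_id
          have h0' := h0.const_add (2*I)
          simpa using h0'
        have hr : Tendsto (fun δ : ℝ => 1/(2*I+δ)) (nhds 0) (nhds (1/(2*I))) :=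
          tendsto_const_nhds.div h1 (by linarith)
        exact (ENNReal.continuous_ofReal.tendsto _).comp (hr.mono_left nhdsWithin_le_nhds)
      refine le_of_tendsto htd ?_
      filter_upwards [self_mem_nhdsWithin] with δ hδ
      exact hstep δ hδ
  constructor
  · rw [tendsto_atTop]
    intro M
    set M' : ℝ := max M 1 with hM'
    have hM'pos : 0 < M' := lt_of_lt_of_le one_pos (le_max_right _ _)
    obtain ⟨ε, hε, hεint, hεsmall⟩ :
        ∃ ε : ℝ, 0 < ε ∧ IntegrableOn (fun x => 1 / τ x) (Ioc 0 ε) volume ∧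
          (∫ x in Ioc (0:ℝ) ε, 1 / τ x) < 1 / (4 * M') := by
      set sq : ℕ → Set ℝ := fun n => Ioc (a₀/(n+1)) a₀ with hsq
      have hsm : ∀ n, MeasurableSet (sq n) := fun n => measurableSet_Ioc
      have hmono : Monotone sq := by
        intro m n hmn
        refine Ioc_subset_Ioc_left ?_
        have hcast : ((m:ℝ)+1) ≤ (n:ℝ)+1 := by
          have : (m:ℝ) ≤ (n:ℝ) := by exact_mod_cast hmn
          linarith
        gcongr
      have hunion : (⋃ n, sq n) = Ioc (0:ℝ) a₀ := by
        ext x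
        simp only [mem_iUnion, hsq, mem_Ioc]
        constructor
        · rintro ⟨n, h1, h2⟩
          exact ⟨lt_trans (by positivity) h1, h2⟩
        · rintro ⟨hx0, hx1⟩
          obtain ⟨n, hn⟩ := exists_nat_gt (a₀/x)
          refine ⟨n, ?_, hx1⟩
          rw [div_lt_iff₀ (by positivity)]
          rw [div_lt_iff₀ hx0] at hn
          nlinarith
      have htend := tendsto_setIntegral_of_monotone hsm hmono
        (by rw [hunion]; exact hτint₀)
      rw [hunion] at htend
      have hd : ∀ n : ℕ, a₀/((n:ℝ)+1) ≤ a₀ := by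
        intro n
        refine div_le_self ha₀.le ?_
        have : (0:ℝ) ≤ (n:ℝ) := Nat.cast_nonneg n
        linarith
      have hadd : ∀ n : ℕ, (∫ x in Ioc (0:ℝ) (a₀/(n+1)), 1/τ x) + (∫ x in sq n, 1/τ x)
          = ∫ x in Ioc (0:ℝ) a₀, 1/τ x := by
        intro n
        rw [← setIntegral_union (Ioc_disjoint_Ioc_of_le le_rfl) measurableSet_Ioc
          (hτint₀.mono_set (Ioc_subset_Ioc_right (hd n)))
          (hτint₀.mono_set (Ioc_subset_Ioc_left (by positivity))),
          Ioc_union_Ioc_eq_Ioc (by positivity) (hd n)]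
      have h0 : Tendsto (fun n : ℕ => ∫ x in Ioc (0:ℝ) (a₀/(n+1)), 1/τ x) atTop (nhds 0) := by
        have hc0 := htend.const_sub (∫ x in Ioc (0:ℝ) a₀, 1/τ x)
        rw [sub_self] at hc0
        refine Tendsto.congr (fun n => ?_) hc0
        have := hadd n
        linarith
      have hlt : (0:ℝ) < 1/(4*M') := by positivity
      obtain ⟨n, hn⟩ := (h0.eventually_lt_const hlt).exists
      exact ⟨a₀/(n+1), by positivity,
        hτint₀.mono_set (Ioc_subset_Ioc_right (hd n)), hn⟩
    obtain ⟨c, hc, hkey⟩ := lam_lower hsa hβpos hsol hε hεint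
    filter_upwards [eventually_ge_atTop (max 1 (2*M'/c))] with a ha
    have ha1 : (1:ℝ) ≤ a := le_trans (le_max_left _ _) ha
    have hapos : 0 < a := lt_of_lt_of_le one_pos ha1
    have h1 := hkey a hapos
    have hac : 0 < a * c := mul_pos hapos hc
    set I : ℝ := ∫ x in Ioc (0:ℝ) ε, 1 / τ x with hI
    have hI0 : 0 ≤ I := setIntegral_nonneg measurableSet_Ioc
      (fun x hx => div_nonneg zero_le_one (hsa.τ_nonneg x hx.1))
    have e1 : (1:ℝ)/(4*M') = (1/4)*(1/M') := by
      rw [one_div, one_div, one_div, mul_inv]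
    have e2 : (1:ℝ)/(2*M') = (1/2)*(1/M') := by
      rw [one_div, one_div, one_div, mul_inv]
    have h2 : 1/(a*c) ≤ 1/(2*M') := by
      have h3 : 2*M'/c ≤ a := le_trans (le_max_right _ _) ha
      rw [div_le_iff₀ hc] at h3
      exact one_div_le_one_div_of_le (by positivity) (by nlinarith)
    rw [e2] at h2
    rw [e1] at hεsmall
    have h1ac : 0 < 1/(a*c) := by positivity
    have hXpos : 0 < 2*I + 1/(a*c) := by linarith
    have hL : 1/(2*I + 1/(a*c)) ≤ Lam a := (div_le_iff₀ hXpos).mpr h1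
    have hfin : M' ≤ 1/(2*I + 1/(a*c)) := by
      have hXle : 2*I + 1/(a*c) ≤ 1/M' := by linarith
      have := one_div_le_one_div_of_le hXpos hXle
      rwa [one_div_one_div] at this
    linarith [le_max_left M 1]
  · exact liminf_part
end

section
/- (Moment inequality.) Let (λ, U) be a solution of the eigenproblem for (τ, β, κ), where the kernel κ satisfies ∫_0^y κ(x,y) dx = 1 and ∫_0^y x κ(x,y) dx = y/2 for all y > 0. Then for every r ≥ 1, λ ∫_0^∞ x^r U(x) dx ≤ r ∫_0^∞ x^{r−1} τ(x) U(x) dx. -/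
open MeasureTheory Filter Set Topology

/-- Moment inequality: if `(λ, U)` solves the eigenproblem for `(τ, β, κ)` and the kernel has
total mass `1` and first moment `y/2`, then for every `r ≥ 1`,
`λ ∫ x^r U ≤ r ∫ x^{r-1} τ U`. -/
theorem moment_inequality
    (τ β : ℝ → ℝ) (κ : ℝ → ℝ → ℝ)
    (hτmeas : Measurable τ) (hβmeas : Measurable β)
    (hτnn : ∀ x : ℝ, 0 < x → 0 ≤ τ x) (hβnn : ∀ x : ℝ, 0 < x → 0 ≤ β x)
    (hκmeas : Measurable (Function.uncurry κ))
    (hκnn : ∀ x y : ℝ, 0 ≤ κ x y) (hκsupp : ∀ x y : ℝ, y < x → κ x y = 0)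
    (hκmass : ∀ y : ℝ, 0 < y → (∫ x in Ioc (0:ℝ) y, κ x y) = 1)
    (hκmean : ∀ y : ℝ, 0 < y → (∫ x in Ioc (0:ℝ) y, x * κ x y) = y / 2)
    (lam : ℝ) (U : ℝ → ℝ)
    (hsol : EigenSolution τ β κ lam U) :
    ∀ r : ℝ, 1 ≤ r →
      lam * ∫ x in Ioi (0:ℝ), x ^ r * U x ≤
        r * ∫ x in Ioi (0:ℝ), x ^ (r - 1) * (τ x * U x) := by
  intro r hr
  have hr0 : (0:ℝ) ≤ r := le_trans zero_le_one hr
  have hr1 : (0:ℝ) ≤ r - 1 := by linarith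
  set I : ℝ → ℝ := fun x => ∫ y in Ioi x, β y * κ x y * U y with hIdef
  set A : ℝ := ∫ x in Ioi (0:ℝ), x ^ (r - 1) * (τ x * U x) with hAdef
  set M : ℝ := ∫ x in Ioi (0:ℝ), x ^ r * U x with hMdef
  set C : ℝ := ∫ x in Ioi (0:ℝ), x ^ r * (β x * U x) with hCdef
  -- a measurable representative of U
  have hUsm : AEStronglyMeasurable U (volume.restrict (Ioi (0:ℝ))) := by
    have h := (hsol.int_U 0 le_rfl).aestronglyMeasurable
    refine h.congr (Filter.Eventually.of_forall fun x => ?_)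
    simp [Real.rpow_zero]
  set V : ℝ → ℝ := hUsm.mk U with hVdef
  have hVmeas : Measurable V := hUsm.stronglyMeasurable_mk.measurable
  have hUV : U =ᵐ[volume.restrict (Ioi (0:ℝ))] V := hUsm.ae_eq_mk
  have hUVx : ∀ x : ℝ, 0 ≤ x → U =ᵐ[volume.restrict (Ioi x)] V :=
    fun x hx => ae_restrict_of_ae_restrict_of_subset (Ioi_subset_Ioi hx) hUV
  have hVpos : ∀ᵐ y ∂(volume.restrict (Ioi (0:ℝ))), 0 < V y ∧ V y = U y := by
    filter_upwards [hUV, ae_restrict_mem measurableSet_Ioi] with y h1 h2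
    exact ⟨h1 ▸ hsol.U_pos y h2, h1.symm⟩
  have hκy : ∀ y : ℝ, Measurable fun x => κ x y := fun y =>
    hκmeas.comp (measurable_id.prodMk measurable_const)
  have hκx : ∀ x : ℝ, Measurable fun y => κ x y := fun x =>
    hκmeas.comp (measurable_const.prodMk measurable_id)
  have hrpow_meas : Measurable fun x : ℝ => x ^ r :=
    (Real.continuous_rpow_const hr0).measurable
  have hxκint : ∀ y : ℝ, 0 < y → IntegrableOn (fun x => x * κ x y) (Ioc 0 y) := by
    intro y hy
    by_contra h
    have h0 := integral_undef h
    rw [hκmean y hy] at h0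
    linarith
  have hxκlin : ∀ y : ℝ, 0 < y →
      ∫⁻ x in Ioc (0:ℝ) y, ENNReal.ofReal (x * κ x y) = ENNReal.ofReal (y / 2) := by
    intro y hy
    rw [← hκmean y hy]
    refine (ofReal_integral_eq_lintegral_ofReal (hxκint y hy) ?_).symm
    filter_upwards [ae_restrict_mem measurableSet_Ioc] with x hx
    exact mul_nonneg hx.1.le (hκnn x y)
  set g : ℝ × ℝ → ENNReal :=
      fun p => ENNReal.ofReal (p.1 ^ r * (β p.2 * κ p.1 p.2 * V p.2)) with hgdef
  have hgmeas : Measurable g := by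
    apply Measurable.ennreal_ofReal
    exact (hrpow_meas.comp measurable_fst).mul
      (((hβmeas.comp measurable_snd).mul hκmeas).mul (hVmeas.comp measurable_snd))
  set W : ℝ → ENNReal := fun x => ∫⁻ y in Ioi (0:ℝ), g (x, y) with hWdef
  have hWmeas : Measurable W := Measurable.lintegral_prod_right hgmeas
  -- pointwise bound in x
  have claim1 : ∀ x ∈ Ioi (0:ℝ), ENNReal.ofReal (x ^ r * I x) ≤ W x := by
    intro x hx
    have hx0 : (0:ℝ) < x := hx
    have hIx : I x = ∫ y in Ioi x, β y * κ x y * V y := by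
      refine integral_congr_ae ?_
      filter_upwards [hUVx x hx0.le] with y hy
      rw [hy]
    by_cases hfint : Integrable (fun y => β y * κ x y * V y) (volume.restrict (Ioi x))
    · have hnn : 0 ≤ᵐ[volume.restrict (Ioi x)] fun y => β y * κ x y * V y := by
        filter_upwards [ae_restrict_of_ae_restrict_of_subset (Ioi_subset_Ioi hx0.le) hVpos,
          ae_restrict_mem measurableSet_Ioi] with y h1 h2
        exact mul_nonneg (mul_nonneg (hβnn y (lt_trans hx0 h2)) (hκnn x y)) h1.1.le
      have hmeas' : Measurable fun y => ENNReal.ofReal (β y * κ x y * V y) :=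
        Measurable.ennreal_ofReal ((hβmeas.mul (hκx x)).mul hVmeas)
      calc ENNReal.ofReal (x ^ r * I x)
          = ENNReal.ofReal (x ^ r) * ENNReal.ofReal (I x) :=
            ENNReal.ofReal_mul (Real.rpow_nonneg hx0.le r)
        _ = ENNReal.ofReal (x ^ r) * ∫⁻ y in Ioi x, ENNReal.ofReal (β y * κ x y * V y) := by
            rw [hIx, ofReal_integral_eq_lintegral_ofReal hfint hnn]
        _ = ∫⁻ y in Ioi x, ENNReal.ofReal (x ^ r) * ENNReal.ofReal (β y * κ x y * V y) :=
            (lintegral_const_mul _ hmeas').symm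
        _ = ∫⁻ y in Ioi x, g (x, y) := by
            refine lintegral_congr fun y => ?_
            rw [hgdef]
            exact (ENNReal.ofReal_mul (Real.rpow_nonneg hx0.le r)).symm
        _ ≤ W x := by
            rw [hWdef]
            exact lintegral_mono_set (Ioi_subset_Ioi hx0.le)
    · rw [hIx, integral_undef hfint, mul_zero, ENNReal.ofReal_zero]
      exact zero_le'
  -- inner bound in y
  have claim3 : ∀ᵐ y ∂(volume.restrict (Ioi (0:ℝ))),
      (∫⁻ x in Ioi (0:ℝ), g (x, y)) ≤ ENNReal.ofReal (y ^ r * (β y * U y) / 2) := by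
    filter_upwards [hVpos, ae_restrict_mem measurableSet_Ioi] with y hy1 hy2
    have hy : (0:ℝ) < y := hy2
    have hc : 0 ≤ β y * V y := mul_nonneg (hβnn y hy) hy1.1.le
    have hmeas2 : Measurable fun x : ℝ =>
        ENNReal.ofReal (y ^ (r - 1) * (x * κ x y) * (β y * V y)) :=
      Measurable.ennreal_ofReal
        ((measurable_const.mul (measurable_id.mul (hκy y))).mul measurable_const)
    have hmeas3 : Measurable fun x : ℝ => ENNReal.ofReal (x * κ x y) :=
      Measurable.ennreal_ofReal (measurable_id.mul (hκy y))
    have hb : ∀ x ∈ Ioi (0:ℝ),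
        g (x, y) ≤ ENNReal.ofReal (y ^ (r - 1) * (x * κ x y) * (β y * V y)) := by
      intro x hx
      have hx0 : (0:ℝ) < x := hx
      rcases le_or_gt x y with hxy | hxy
      · apply ENNReal.ofReal_le_ofReal
        have h1 : x ^ r ≤ y ^ (r - 1) * x := by
          have hxr : x ^ r = x ^ (r - 1) * x := by
            rw [← Real.rpow_add_one (ne_of_gt hx0) (r - 1)]
            ring_nf
          rw [hxr]
          exact mul_le_mul_of_nonneg_right (Real.rpow_le_rpow hx0.le hxy hr1) hx0.le
        calc x ^ r * (β y * κ x y * V y) = x ^ r * κ x y * (β y * V y) := by ring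
          _ ≤ y ^ (r - 1) * x * κ x y * (β y * V y) :=
              mul_le_mul_of_nonneg_right
                (mul_le_mul_of_nonneg_right h1 (hκnn x y)) hc
          _ = y ^ (r - 1) * (x * κ x y) * (β y * V y) := by ring
      · simp [hgdef, hκsupp x y hxy]
    calc (∫⁻ x in Ioi (0:ℝ), g (x, y))
        ≤ ∫⁻ x in Ioi (0:ℝ), ENNReal.ofReal (y ^ (r - 1) * (x * κ x y) * (β y * V y)) :=
          setLIntegral_mono hmeas2 hb
      _ = (∫⁻ x in Ioc (0:ℝ) y, ENNReal.ofReal (y ^ (r - 1) * (x * κ x y) * (β y * V y)))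
          + ∫⁻ x in Ioi y, ENNReal.ofReal (y ^ (r - 1) * (x * κ x y) * (β y * V y)) := by
          rw [← lintegral_union measurableSet_Ioi (Ioc_disjoint_Ioi le_rfl),
            Ioc_union_Ioi_eq_Ioi hy.le]
      _ = ∫⁻ x in Ioc (0:ℝ) y, ENNReal.ofReal (y ^ (r - 1) * (x * κ x y) * (β y * V y)) := by
          have hz0 : ∀ x, x ∈ Ioi y →
              ENNReal.ofReal (y ^ (r - 1) * (x * κ x y) * (β y * V y)) = (0:ENNReal) := by
            intro x hx
            rw [hκsupp x y hx]
            simp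
          have hz : ∫⁻ x in Ioi y, ENNReal.ofReal (y ^ (r - 1) * (x * κ x y) * (β y * V y))
              = 0 := by
            rw [setLIntegral_congr_fun measurableSet_Ioi hz0, lintegral_zero]
          rw [hz, add_zero]
      _ = ∫⁻ x in Ioc (0:ℝ) y,
            (ENNReal.ofReal (y ^ (r - 1)) * ENNReal.ofReal (x * κ x y))
              * ENNReal.ofReal (β y * V y) := by
          refine setLIntegral_congr_fun measurableSet_Ioc (fun x hx => ?_)
          rw [ENNReal.ofReal_mul (mul_nonneg (Real.rpow_nonneg hy.le _)
            (mul_nonneg hx.1.le (hκnn x y))), ENNReal.ofReal_mul (Real.rpow_nonneg hy.le _)]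
      _ = ENNReal.ofReal (y ^ (r - 1)) * ENNReal.ofReal (y / 2) * ENNReal.ofReal (β y * V y) := by
          rw [lintegral_mul_const _ (hmeas3.const_mul _), lintegral_const_mul _ hmeas3,
            hxκlin y hy]
      _ = ENNReal.ofReal (y ^ r * (β y * U y) / 2) := by
          rw [← ENNReal.ofReal_mul (Real.rpow_nonneg hy.le _),
            ← ENNReal.ofReal_mul (mul_nonneg (Real.rpow_nonneg hy.le _) (by positivity))]
          congr 1
          rw [hy1.2]
          have hyr : y ^ (r - 1) * y = y ^ r := by
            rw [← Real.rpow_add_one (ne_of_gt hy) (r - 1)]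
            ring_nf
          calc y ^ (r - 1) * (y / 2) * (β y * U y)
              = y ^ (r - 1) * y * (β y * U y) / 2 := by ring
            _ = y ^ r * (β y * U y) / 2 := by rw [hyr]
  have hCint : IntegrableOn (fun x => x ^ r * (β x * U x)) (Ioi 0) := hsol.int_betaU r hr0
  have hC2 : ∫⁻ y in Ioi (0:ℝ), ENNReal.ofReal (y ^ r * (β y * U y) / 2)
      = ENNReal.ofReal (C / 2) := by
    have hnn' : 0 ≤ᵐ[volume.restrict (Ioi (0:ℝ))] fun y => y ^ r * (β y * U y) / 2 := by
      filter_upwards [ae_restrict_mem measurableSet_Ioi] with y hy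
      have := hsol.U_pos y hy
      have := hβnn y hy
      have := Real.rpow_nonneg (le_of_lt hy) r
      positivity
    rw [hCdef, ← integral_div]
    exact (ofReal_integral_eq_lintegral_ofReal (hCint.div_const 2) hnn').symm
  have hLbound : ∫⁻ x in Ioi (0:ℝ), ENNReal.ofReal (x ^ r * I x) ≤ ENNReal.ofReal (C / 2) := by
    calc ∫⁻ x in Ioi (0:ℝ), ENNReal.ofReal (x ^ r * I x)
        ≤ ∫⁻ x in Ioi (0:ℝ), W x := setLIntegral_mono hWmeas claim1
      _ = ∫⁻ y in Ioi (0:ℝ), ∫⁻ x in Ioi (0:ℝ), g (x, y) :=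
          lintegral_lintegral_swap hgmeas.aemeasurable
      _ ≤ ∫⁻ y in Ioi (0:ℝ), ENNReal.ofReal (y ^ r * (β y * U y) / 2) := lintegral_mono_ae claim3
      _ = ENNReal.ofReal (C / 2) := hC2
  -- nonnegativity facts
  have hInn : ∀ x ∈ Ioi (0:ℝ), 0 ≤ I x := by
    intro x hx
    apply integral_nonneg_of_ae
    filter_upwards [ae_restrict_mem measurableSet_Ioi] with y hy
    exact mul_nonneg (mul_nonneg (hβnn y (lt_trans hx hy)) (hκnn x y))
      (hsol.U_pos y (lt_trans hx hy)).le
  have hBnn : 0 ≤ᵐ[volume.restrict (Ioi (0:ℝ))] fun x => x ^ r * I x := by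
    filter_upwards [ae_restrict_mem measurableSet_Ioi] with x hx
    exact mul_nonneg (Real.rpow_nonneg (le_of_lt hx) r) (hInn x hx)
  have hCnn : (0:ℝ) ≤ C := by
    rw [hCdef]
    apply integral_nonneg_of_ae
    filter_upwards [ae_restrict_mem measurableSet_Ioi] with x hx
    exact mul_nonneg (Real.rpow_nonneg (le_of_lt hx) r)
      (mul_nonneg (hβnn x hx) (hsol.U_pos x hx).le)
  -- measurability and integrability of x ^ r * I x
  have hBint : IntegrableOn (fun x => x ^ r * I x) (Ioi 0) := by
    have hF2meas : Measurable fun p : ℝ × ℝ =>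
        if p.1 < p.2 then β p.2 * κ p.1 p.2 * V p.2 else 0 := by
      refine Measurable.ite (measurableSet_lt measurable_fst measurable_snd) ?_ measurable_const
      exact ((hβmeas.comp measurable_snd).mul hκmeas).mul (hVmeas.comp measurable_snd)
    have hIVsm : StronglyMeasurable fun x =>
        ∫ y, (if x < y then β y * κ x y * V y else 0) := by
      exact StronglyMeasurable.integral_prod_right
        (f := fun x y => if x < y then β y * κ x y * V y else 0) hF2meas.stronglyMeasurable
    have hIVeq : ∀ x ∈ Ioi (0:ℝ), I x = ∫ y, (if x < y then β y * κ x y * V y else 0) := by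
      intro x hx
      have hIx : I x = ∫ y in Ioi x, β y * κ x y * V y := by
        refine integral_congr_ae ?_
        filter_upwards [hUVx x (le_of_lt hx)] with y hy
        rw [hy]
      rw [hIx, ← integral_indicator measurableSet_Ioi]
      rfl
    have hBsm : AEStronglyMeasurable (fun x => x ^ r * I x)
        (volume.restrict (Ioi (0:ℝ))) := by
      refine AEStronglyMeasurable.congr
        ((hrpow_meas.stronglyMeasurable.mul hIVsm).aestronglyMeasurable) ?_
      filter_upwards [ae_restrict_mem measurableSet_Ioi] with x hx
      simp only [Pi.mul_apply]
      rw [hIVeq x hx]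
    refine ⟨hBsm, ?_⟩
    rw [hasFiniteIntegral_iff_ofReal hBnn]
    exact lt_of_le_of_lt hLbound ENNReal.ofReal_lt_top
  have hBle : (∫ x in Ioi (0:ℝ), x ^ r * I x) ≤ C / 2 := by
    have h1 := ofReal_integral_eq_lintegral_ofReal hBint hBnn
    have h2 : ENNReal.ofReal (∫ x in Ioi (0:ℝ), x ^ r * I x) ≤ ENNReal.ofReal (C / 2) :=
      h1 ▸ hLbound
    exact (ENNReal.ofReal_le_ofReal_iff (by linarith)).mp h2
  -- the FTC part
  set H' : ℝ → ℝ := fun x => r * (x ^ (r - 1) * (τ x * U x))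
      + (2 * (x ^ r * I x) - x ^ r * (β x * U x) - lam * (x ^ r * U x)) with hH'def
  have hD : ∀ x ∈ Ioi (0:ℝ), HasDerivAt (fun t => t ^ r * (τ t * U t)) (H' x) x := by
    intro x hx
    have h1 : HasDerivAt (fun t : ℝ => t ^ r) (r * x ^ (r - 1)) x :=
      Real.hasDerivAt_rpow_const (Or.inl (ne_of_gt hx))
    have h2 := hsol.eqn x hx
    have h3 : HasDerivAt (fun t => t ^ r * (τ t * U t)) _ x := h1.mul h2
    convert h3 using 1
    simp only [hH'def, hIdef]
    ring
  have h1int : IntegrableOn (fun x => r * (x ^ (r - 1) * (τ x * U x))) (Ioi 0) :=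
    (hsol.int_tauU (r - 1) hr1).const_mul r
  have h2int : IntegrableOn
      (fun x => 2 * (x ^ r * I x) - x ^ r * (β x * U x) - lam * (x ^ r * U x)) (Ioi 0) :=
    ((hBint.const_mul 2).sub (hsol.int_betaU r hr0)).sub ((hsol.int_U r hr0).const_mul lam)
  have hH'int : IntegrableOn H' (Ioi 0) := h1int.add h2int
  have htop : ∫ x in Ioi (1:ℝ), H' x = 0 - (1:ℝ) ^ r * (τ 1 * U 1) := by
    exact integral_Ioi_of_hasDerivAt_of_tendsto' (a := 1)
      (f := fun x => x ^ r * (τ x * U x)) (f' := H')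
      (fun x hx => hD x (mem_Ioi.mpr (lt_of_lt_of_le one_pos hx)))
      (hH'int.mono_set (Ioi_subset_Ioi zero_le_one)) (hsol.lim_top r hr0)
  have hIoc : ∫ x in Ioc (0:ℝ) 1, H' x = (1:ℝ) ^ r * (τ 1 * U 1) := by
    have hposn : ∀ n : ℕ, (0:ℝ) < ((n:ℝ) + 2)⁻¹ := fun n => by positivity
    have hlen : ∀ n : ℕ, ((n:ℝ) + 2)⁻¹ ≤ 1 := by
      intro n
      have h1 : (1:ℝ) ≤ (n:ℝ) + 2 := by
        have := Nat.cast_nonneg (α := ℝ) n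
        linarith
      have h2 := inv_anti₀ one_pos h1
      rwa [inv_one] at h2
    have hmono : Monotone fun n : ℕ => Ioc (((n:ℝ) + 2)⁻¹) 1 := by
      intro m n hmn
      refine Ioc_subset_Ioc_left (inv_anti₀ (by positivity) ?_)
      have := (Nat.cast_le (α := ℝ)).mpr hmn
      linarith
    have hunion : (⋃ n : ℕ, Ioc (((n:ℝ) + 2)⁻¹) 1) = Ioc (0:ℝ) 1 := by
      apply Subset.antisymm
      · exact iUnion_subset fun n => Ioc_subset_Ioc_left (hposn n).le
      · intro x hx
        obtain ⟨n, hn⟩ := exists_nat_gt x⁻¹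
        refine mem_iUnion.mpr ⟨n, ?_, hx.2⟩
        have hx0 : (0:ℝ) < x := hx.1
        have h1 : x⁻¹ < (n:ℝ) + 2 := by linarith
        have h2 := inv_strictAnti₀ (inv_pos.mpr hx0) h1
        rwa [inv_inv] at h2
    have heval : ∀ n : ℕ, ∫ x in Ioc (((n:ℝ) + 2)⁻¹) 1, H' x
        = (1:ℝ) ^ r * (τ 1 * U 1)
          - (((n:ℝ) + 2)⁻¹) ^ r * (τ (((n:ℝ) + 2)⁻¹) * U (((n:ℝ) + 2)⁻¹)) := by
      intro n
      rw [← intervalIntegral.integral_of_le (hlen n)]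
      refine intervalIntegral.integral_eq_sub_of_hasDerivAt (f := fun x => x ^ r * (τ x * U x)) (f' := H') (fun x hx => ?_) ?_
      · rw [uIcc_of_le (hlen n)] at hx
        exact hD x (lt_of_lt_of_le (hposn n) hx.1)
      · rw [intervalIntegrable_iff_integrableOn_Ioc_of_le (hlen n)]
        exact hH'int.mono_set fun x hx => lt_trans (hposn n) hx.1
    have hseq : Tendsto (fun n : ℕ => ((n:ℝ) + 2)⁻¹) atTop (nhdsWithin 0 (Ioi 0)) := by
      apply tendsto_nhdsWithin_of_tendsto_nhds_of_eventually_within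
      · have h1 : Tendsto (fun n : ℕ => (n:ℝ) + 2) atTop atTop :=
          tendsto_atTop_add_const_right _ 2 tendsto_natCast_atTop_atTop
        exact tendsto_inv_atTop_zero.comp h1
      · exact Filter.Eventually.of_forall fun n => hposn n
    have hlim2 : Tendsto (fun n : ℕ => ∫ x in Ioc (((n:ℝ) + 2)⁻¹) 1, H' x) atTop
        (𝓝 ((1:ℝ) ^ r * (τ 1 * U 1) - 0)) := by
      simp only [heval]
      exact Tendsto.const_sub _ ((hsol.lim_zero r hr0).comp hseq)
    have hten := tendsto_setIntegral_of_monotone (fun n : ℕ => measurableSet_Ioc) hmono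
      (by rw [hunion]; exact hH'int.mono_set Ioc_subset_Ioi_self)
    rw [hunion] at hten
    have huniq := tendsto_nhds_unique hten hlim2
    rw [huniq, sub_zero]
  have hzero : ∫ x in Ioi (0:ℝ), H' x = 0 := by
    rw [← Ioc_union_Ioi_eq_Ioi (zero_le_one : (0:ℝ) ≤ 1),
      setIntegral_union (Ioc_disjoint_Ioi le_rfl) measurableSet_Ioi
        (hH'int.mono_set Ioc_subset_Ioi_self) (hH'int.mono_set (Ioi_subset_Ioi zero_le_one)),
      hIoc, htop]
    ring
  have hsplit : ∫ x in Ioi (0:ℝ), H' x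
      = r * A + (2 * (∫ x in Ioi (0:ℝ), x ^ r * I x) - C - lam * M) := by
    have ha : IntegrableOn (fun x => 2 * (x ^ r * I x)) (Ioi 0) volume := hBint.const_mul 2
    have hb : IntegrableOn (fun x => lam * (x ^ r * U x)) (Ioi 0) volume :=
      (hsol.int_U r hr0).const_mul lam
    have hab : IntegrableOn (fun x => 2 * (x ^ r * I x) - x ^ r * (β x * U x)) (Ioi 0) volume := by
      exact ha.sub (hsol.int_betaU r hr0)
    rw [hH'def]
    rw [integral_add h1int h2int, integral_sub hab hb,
      integral_sub ha (hsol.int_betaU r hr0),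
      integral_const_mul, integral_const_mul, integral_const_mul]
  rw [hsplit] at hzero
  linarith
end

section
/- (Eigenvalue as mean relative growth rate.) Let (λ, U) be a solution of the eigenproblem for (τ, β, κ), where the kernel κ satisfies ∫_0^y κ(x,y) dx = 1 and ∫_0^y x κ(x,y) dx = y/2 for all y > 0. Then λ ∫_0^∞ x U(x) dx = ∫_0^∞ τ(x) U(x) dx. In particular, ess inf_{x>0} τ(x)/x ≤ λ ≤ ess sup_{x>0} τ(x)/x. -/
open MeasureTheory Filter Set Topology

private lemma aux_aemeasurable_lintegral_prod_right
    {μ ν : Measure ℝ} [SFinite ν] {f : ℝ × ℝ → ENNReal}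
    (hf : AEMeasurable f (μ.prod ν)) :
    AEMeasurable (fun x => ∫⁻ y, f (x, y) ∂ν) μ := by
  refine ⟨fun x => ∫⁻ y, hf.mk f (x, y) ∂ν, hf.measurable_mk.lintegral_prod_right', ?_⟩
  filter_upwards [MeasureTheory.Measure.ae_ae_of_ae_prod hf.ae_eq_mk] with x hx using
    lintegral_congr_ae hx

/-- Eigenvalue as mean relative growth rate: if `(λ, U)` solves the eigenproblem for
`(τ, β, κ)` and the kernel has total mass `1` and first moment `y/2`, then
`λ ∫ x U = ∫ τ U`; in particular `ess inf τ(x)/x ≤ λ ≤ ess sup τ(x)/x` on `(0,∞)`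
(in `[0,+∞]`). -/
theorem eigenvalue_eq_mean_relative_growth
    (τ β : ℝ → ℝ) (κ : ℝ → ℝ → ℝ)
    (hτmeas : Measurable τ) (hβmeas : Measurable β)
    (hτnn : ∀ x : ℝ, 0 < x → 0 ≤ τ x) (hβnn : ∀ x : ℝ, 0 < x → 0 ≤ β x)
    (hκmeas : Measurable (Function.uncurry κ))
    (hκnn : ∀ x y : ℝ, 0 ≤ κ x y) (hκsupp : ∀ x y : ℝ, y < x → κ x y = 0)
    (hκmass : ∀ y : ℝ, 0 < y → (∫ x in Ioc (0:ℝ) y, κ x y) = 1)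
    (hκmean : ∀ y : ℝ, 0 < y → (∫ x in Ioc (0:ℝ) y, x * κ x y) = y / 2)
    (lam : ℝ) (U : ℝ → ℝ)
    (hsol : EigenSolution τ β κ lam U) :
    lam * (∫ x in Ioi (0:ℝ), x * U x) = (∫ x in Ioi (0:ℝ), τ x * U x) ∧
    essInf (fun x => ENNReal.ofReal (τ x / x)) (volume.restrict (Ioi 0)) ≤
      ENNReal.ofReal lam ∧
    ENNReal.ofReal lam ≤
      essSup (fun x => ENNReal.ofReal (τ x / x)) (volume.restrict (Ioi 0)) := by
  obtain ⟨hlam, hU, heqn, hnorm, hintU, hintbU, hinttU, hlim0, hlimtop⟩ := hsol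
  have hUaem : AEMeasurable U (volume.restrict (Ioi (0:ℝ))) := by
    have := (hintU 0 le_rfl).aemeasurable
    simpa [Real.rpow_zero] using this
  have hτU : IntegrableOn (fun x => τ x * U x) (Ioi 0) volume := by
    simpa [Real.rpow_zero] using hinttU 0 le_rfl
  have hxU : IntegrableOn (fun x => x * U x) (Ioi 0) volume := by
    simpa [Real.rpow_one] using hintU 1 zero_le_one
  have hxβU : IntegrableOn (fun x => x * (β x * U x)) (Ioi 0) volume := by
    simpa [Real.rpow_one] using hintbU 1 zero_le_one
  -- the inner Bochner integral and its `ℝ≥0∞` counterpart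
  set J : ℝ → ℝ := fun x => ∫ y in Ioi x, β y * κ x y * U y with hJdef
  set Φ : ℝ → ENNReal :=
    fun x => ∫⁻ y in Ioi x, ENNReal.ofReal (β y * κ x y * U y) with hΦdef
  have hJtoReal : ∀ x : ℝ, 0 < x → J x = (Φ x).toReal := by
    intro x hx
    have hU' : AEMeasurable U (volume.restrict (Ioi x)) :=
      hUaem.mono_measure (Measure.restrict_mono (Ioi_subset_Ioi hx.le) le_rfl)
    have hκx : Measurable fun y => κ x y := hκmeas.comp measurable_prodMk_left
    have hm : AEStronglyMeasurable (fun y => β y * κ x y * U y)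
        (volume.restrict (Ioi x)) :=
      (((hβmeas.mul hκx).aemeasurable).mul hU').aestronglyMeasurable
    have hnn : 0 ≤ᵐ[volume.restrict (Ioi x)] fun y => β y * κ x y * U y := by
      filter_upwards [ae_restrict_mem measurableSet_Ioi] with y hy
      exact mul_nonneg (mul_nonneg (hβnn y (hx.trans hy)) (hκnn x y)) (hU y (hx.trans hy)).le
    exact integral_eq_lintegral_of_nonneg_ae hnn hm
  -- the product function for Tonelli
  set F2 : ℝ × ℝ → ENNReal :=
    fun p => ENNReal.ofReal (p.1 * (β p.2 * κ p.1 p.2 * U p.2)) with hF2def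
  have hF2m : AEMeasurable F2 ((volume.restrict (Ioi (0:ℝ))).prod
      (volume.restrict (Ioi (0:ℝ)))) := by
    have hUsnd : AEMeasurable (fun p : ℝ × ℝ => U p.2)
        ((volume.restrict (Ioi (0:ℝ))).prod (volume.restrict (Ioi (0:ℝ)))) :=
      AEMeasurable.comp_snd hUaem
    exact ENNReal.measurable_ofReal.comp_aemeasurable
      ((measurable_fst.aemeasurable).mul
        (((hβmeas.comp measurable_snd).aemeasurable.mul hκmeas.aemeasurable).mul hUsnd))
  set Ival : ℝ := ∫ y in Ioi (0:ℝ), (y / 2) * (β y * U y) with hIdef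
  have hIint : IntegrableOn (fun y => (y / 2) * (β y * U y)) (Ioi 0) volume :=
    (hxβU.const_mul (1/2)).congr (ae_of_all _ fun y => by ring)
  have hInn : 0 ≤ Ival :=
    setIntegral_nonneg measurableSet_Ioi fun y hy =>
      mul_nonneg (div_nonneg hy.le (by norm_num)) (mul_nonneg (hβnn y hy) (hU y hy).le)
  -- the inner `x`-integral for fixed `y > 0`
  have hinner : ∀ y : ℝ, 0 < y →
      (∫⁻ x in Ioi (0:ℝ), F2 (x, y)) = ENNReal.ofReal ((y / 2) * (β y * U y)) := by
    intro y hy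
    have hxκint : IntegrableOn (fun x => x * κ x y) (Ioc 0 y) volume := by
      by_contra hc
      have h0 := integral_undef hc
      rw [hκmean y hy] at h0
      linarith
    have hnn2 : 0 ≤ᵐ[volume.restrict (Ioc (0:ℝ) y)] fun x => x * κ x y := by
      filter_upwards [ae_restrict_mem measurableSet_Ioc] with x hx
      exact mul_nonneg hx.1.le (hκnn x y)
    have hlx : (∫⁻ x in Ioi (0:ℝ), ENNReal.ofReal (x * κ x y))
        = ENNReal.ofReal (y / 2) := by
      rw [← Ioc_union_Ioi_eq_Ioi hy.le,
        lintegral_union measurableSet_Ioi Ioc_disjoint_Ioi_same]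
      have hz : (∫⁻ x in Ioi y, ENNReal.ofReal (x * κ x y)) = 0 := by
        rw [setLIntegral_congr_fun_ae measurableSet_Ioi
          (ae_of_all _ fun x (hx : y < x) => by
            rw [hκsupp x y hx, mul_zero, ENNReal.ofReal_zero]), lintegral_zero]
      rw [hz, add_zero, ← ofReal_integral_eq_lintegral_ofReal hxκint hnn2, hκmean y hy]
    have hpt : ∀ x : ℝ,
        F2 (x, y) = ENNReal.ofReal (β y * U y) * ENNReal.ofReal (x * κ x y) := by
      intro x
      rw [← ENNReal.ofReal_mul (mul_nonneg (hβnn y hy) (hU y hy).le)]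
      exact congrArg ENNReal.ofReal (by ring)
    calc (∫⁻ x in Ioi (0:ℝ), F2 (x, y))
        = ∫⁻ x in Ioi (0:ℝ), ENNReal.ofReal (β y * U y) * ENNReal.ofReal (x * κ x y) :=
          lintegral_congr fun x => hpt x
      _ = ENNReal.ofReal (β y * U y) * ENNReal.ofReal (y / 2) := by
          rw [lintegral_const_mul' _ _ ENNReal.ofReal_ne_top, hlx]
      _ = ENNReal.ofReal ((y / 2) * (β y * U y)) := by
          rw [← ENNReal.ofReal_mul (mul_nonneg (hβnn y hy) (hU y hy).le), mul_comm]
  -- reduction of the inner `y`-integral for fixed `x > 0`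
  have hx_red : ∀ x : ℝ, 0 < x →
      (∫⁻ y in Ioi (0:ℝ), F2 (x, y)) = ENNReal.ofReal x * Φ x := by
    intro x hx
    have hsplit : (∫⁻ y in Ioi (0:ℝ), F2 (x, y)) =
        (∫⁻ y in Ioc (0:ℝ) x, F2 (x, y)) + ∫⁻ y in Ioi x, F2 (x, y) := by
      rw [← lintegral_union measurableSet_Ioi Ioc_disjoint_Ioi_same,
        Ioc_union_Ioi_eq_Ioi hx.le]
    have hz : (∫⁻ y in Ioc (0:ℝ) x, F2 (x, y)) = 0 := by
      rw [setLIntegral_congr Ioo_ae_eq_Ioc.symm,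
        setLIntegral_congr_fun_ae measurableSet_Ioo
          (ae_of_all _ fun y (hy : y ∈ Ioo (0:ℝ) x) => by
            show F2 (x, y) = 0
            rw [hF2def]
            simp only [hκsupp x y hy.2, mul_zero, zero_mul, ENNReal.ofReal_zero]),
        lintegral_zero]
    have hrest : (∫⁻ y in Ioi x, F2 (x, y)) = ENNReal.ofReal x * Φ x := by
      rw [hΦdef, ← lintegral_const_mul' _ _ ENNReal.ofReal_ne_top]
      refine lintegral_congr fun y => ?_
      rw [hF2def, ← ENNReal.ofReal_mul hx.le]
    rw [hsplit, hz, zero_add, hrest]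
  -- Tonelli
  have hgm : AEMeasurable (fun x => ∫⁻ y in Ioi (0:ℝ), F2 (x, y))
      (volume.restrict (Ioi (0:ℝ))) := aux_aemeasurable_lintegral_prod_right hF2m
  have hgtot : (∫⁻ x in Ioi (0:ℝ), ∫⁻ y in Ioi (0:ℝ), F2 (x, y)) =
      ENNReal.ofReal Ival := by
    have hswap := lintegral_lintegral_swap (μ := volume.restrict (Ioi (0:ℝ)))
      (ν := volume.restrict (Ioi (0:ℝ))) (f := fun x y => F2 (x, y)) hF2m
    rw [hswap]
    have h1 : (∫⁻ y in Ioi (0:ℝ), ∫⁻ x in Ioi (0:ℝ), F2 (x, y)) =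
        ∫⁻ y in Ioi (0:ℝ), ENNReal.ofReal ((y / 2) * (β y * U y)) := by
      refine lintegral_congr_ae ?_
      filter_upwards [ae_restrict_mem measurableSet_Ioi] with y hy using hinner y hy
    have hnn3 : 0 ≤ᵐ[volume.restrict (Ioi (0:ℝ))] fun y => (y / 2) * (β y * U y) := by
      filter_upwards [ae_restrict_mem measurableSet_Ioi] with y hy
      exact mul_nonneg (div_nonneg hy.le (by norm_num))
        (mul_nonneg (hβnn y hy) (hU y hy).le)
    rw [h1, ← ofReal_integral_eq_lintegral_ofReal hIint hnn3]
  -- integrability and value of `x * J x`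
  have hkey : ∀ x : ℝ, 0 < x →
      ((∫⁻ y in Ioi (0:ℝ), F2 (x, y)) : ENNReal).toReal = x * J x := by
    intro x hx
    rw [hx_red x hx, ENNReal.toReal_mul, ENNReal.toReal_ofReal hx.le, hJtoReal x hx]
  have hxJint : IntegrableOn (fun x => x * J x) (Ioi 0) volume := by
    refine (integrable_toReal_of_lintegral_ne_top hgm ?_).congr ?_
    · rw [hgtot]; exact ENNReal.ofReal_ne_top
    · filter_upwards [ae_restrict_mem measurableSet_Ioi] with x hx using hkey x hx
  have hxJval : (∫ x in Ioi (0:ℝ), x * J x) = Ival := by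
    have h1 : (∫ x in Ioi (0:ℝ), x * J x) =
        ∫ x in Ioi (0:ℝ), ((∫⁻ y in Ioi (0:ℝ), F2 (x, y)) : ENNReal).toReal := by
      refine integral_congr_ae ?_
      filter_upwards [ae_restrict_mem measurableSet_Ioi] with x hx using (hkey x hx).symm
    rw [h1, integral_toReal hgm ?_, hgtot, ENNReal.toReal_ofReal hInn]
    filter_upwards [ae_lt_top' hgm (by rw [hgtot]; exact ENNReal.ofReal_ne_top)] with x hx
      using hx
  -- FTC : the integral of `W` over `(0,∞)` vanishes
  set W : ℝ → ℝ := fun x => τ x * U x + x * (2 * J x - (β x + lam) * U x) with hWdef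
  have hderiv : ∀ x : ℝ, 0 < x → HasDerivAt (fun y => y * (τ y * U y)) (W x) x := by
    intro x hx
    have h := (hasDerivAt_id x).fun_mul (heqn x hx)
    simpa [hWdef, hJdef] using h
  have hWint : IntegrableOn W (Ioi 0) volume := by
    have hrepr : W = fun x =>
        (τ x * U x + 2 * (x * J x)) - (x * (β x * U x) + lam * (x * U x)) :=
      funext fun x => by simp only [hWdef]; ring
    rw [hrepr]
    exact (hτU.add (hxJint.const_mul 2)).sub (hxβU.add (hxU.const_mul lam))
  have hWzero : (∫ x in Ioi (0:ℝ), W x) = 0 := by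
    set s : ℕ → Set ℝ := fun n => Ioc (((n:ℝ)+1)⁻¹) ((n:ℝ)+1) with hsdef
    have hsm : ∀ n, MeasurableSet (s n) := fun n => measurableSet_Ioc
    have hmono : Monotone s := by
      intro m n hmn
      have hc : (m:ℝ) ≤ n := Nat.cast_le.2 hmn
      exact Ioc_subset_Ioc (inv_anti₀ (by positivity) (by linarith)) (by linarith)
    have hunion : (⋃ n, s n) = Ioi (0:ℝ) := by
      ext x
      simp only [mem_iUnion, hsdef, mem_Ioc, mem_Ioi]
      constructor
      · rintro ⟨n, h1, h2⟩
        exact lt_trans (by positivity) h1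
      · intro hx
        obtain ⟨n, hn⟩ := exists_nat_gt (max x⁻¹ x)
        have h1 : x⁻¹ < (n:ℝ) + 1 := lt_trans (lt_of_le_of_lt (le_max_left _ _) hn)
          (by linarith)
        have h2 : x < (n:ℝ) + 1 := lt_trans (lt_of_le_of_lt (le_max_right _ _) hn)
          (by linarith)
        exact ⟨n, inv_lt_of_inv_lt₀ hx h1, h2.le⟩
    have h1 : Tendsto (fun n => ∫ x in s n, W x) atTop (𝓝 (∫ x in Ioi (0:ℝ), W x)) := by
      have := tendsto_setIntegral_of_monotone hsm hmono (hunion ▸ hWint)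
      rwa [hunion] at this
    have h2 : ∀ n : ℕ, (∫ x in s n, W x) =
        ((n:ℝ)+1) * (τ ((n:ℝ)+1) * U ((n:ℝ)+1)) -
          (((n:ℝ)+1)⁻¹) * (τ (((n:ℝ)+1)⁻¹) * U (((n:ℝ)+1)⁻¹)) := by
      intro n
      have ha : (0:ℝ) < ((n:ℝ)+1)⁻¹ := by positivity
      have h1n : (1:ℝ) ≤ (n:ℝ)+1 := by
        have := Nat.cast_nonneg (α := ℝ) n
        linarith
      have hab : ((n:ℝ)+1)⁻¹ ≤ (n:ℝ)+1 := le_trans (inv_le_one_of_one_le₀ h1n) h1n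
      have hsub : uIcc (((n:ℝ)+1)⁻¹) ((n:ℝ)+1) ⊆ Ioi (0:ℝ) := by
        rw [uIcc_of_le hab]
        exact fun z hz => lt_of_lt_of_le ha hz.1
      have := intervalIntegral.integral_eq_sub_of_hasDerivAt
        (f := fun y => y * (τ y * U y)) (f' := W)
        (fun z hz => hderiv z (hsub hz))
        ((hWint.mono_set hsub).intervalIntegrable)
      rw [intervalIntegral.integral_of_le hab] at this
      exact this
    have hHtop : Tendsto (fun x => x * (τ x * U x)) atTop (𝓝 0) := by
      simpa [Real.rpow_one] using hlimtop 1 zero_le_one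
    have hH0 : Tendsto (fun x => x * (τ x * U x)) (nhdsWithin 0 (Ioi 0)) (𝓝 0) := by
      simpa [Real.rpow_one] using hlim0 1 zero_le_one
    have t1 : Tendsto (fun n : ℕ => (n:ℝ)+1) atTop atTop :=
      tendsto_atTop_add_const_right _ 1 tendsto_natCast_atTop_atTop
    have t2 : Tendsto (fun n : ℕ => ((n:ℝ)+1)⁻¹) atTop (nhdsWithin 0 (Ioi 0)) := by
      refine tendsto_nhdsWithin_of_tendsto_nhds_of_eventually_within _
        (tendsto_inv_atTop_zero.comp t1) (Eventually.of_forall fun n => ?_)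
      exact mem_Ioi.2 (by positivity)
    have h3 : Tendsto (fun n : ℕ => ∫ x in s n, W x) atTop (𝓝 0) := by
      have h4 := (hHtop.comp t1).sub (hH0.comp t2)
      rw [sub_zero] at h4
      exact h4.congr fun n => (h2 n).symm
    exact tendsto_nhds_unique h1 h3
  -- main identity
  have hmain : lam * (∫ x in Ioi (0:ℝ), x * U x) = ∫ x in Ioi (0:ℝ), τ x * U x := by
    have hrepr : W = fun x =>
        (τ x * U x + 2 * (x * J x)) - (x * (β x * U x) + lam * (x * U x)) :=
      funext fun x => by simp only [hWdef]; ring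
    have hint1 : IntegrableOn (fun x => τ x * U x + 2 * (x * J x)) (Ioi 0) volume :=
      hτU.add (hxJint.const_mul 2)
    have hint2 : IntegrableOn (fun x => x * (β x * U x) + lam * (x * U x)) (Ioi 0) volume :=
      hxβU.add (hxU.const_mul lam)
    have hint3 : IntegrableOn (fun x => 2 * (x * J x)) (Ioi 0) volume := hxJint.const_mul 2
    have hint4 : IntegrableOn (fun x => lam * (x * U x)) (Ioi 0) volume := hxU.const_mul lam
    have e1 : (∫ x in Ioi (0:ℝ), W x) =
        ((∫ x in Ioi (0:ℝ), τ x * U x) + 2 * ∫ x in Ioi (0:ℝ), x * J x) -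
          ((∫ x in Ioi (0:ℝ), x * (β x * U x)) + lam * ∫ x in Ioi (0:ℝ), x * U x) := by
      rw [hrepr, integral_sub hint1 hint2, integral_add hτU hint3, integral_add hxβU hint4,
        integral_const_mul, integral_const_mul]
    have e2 : 2 * Ival = ∫ x in Ioi (0:ℝ), x * (β x * U x) := by
      rw [hIdef, ← integral_const_mul]
      exact setIntegral_congr_fun measurableSet_Ioi fun y _ => by ring
    rw [hWzero, hxJval, e2] at e1
    linarith
  have hP : 0 < ∫ x in Ioi (0:ℝ), x * U x := by
    rw [setIntegral_pos_iff_support_of_nonneg_ae ?nn hxU]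
    case nn =>
      filter_upwards [ae_restrict_mem measurableSet_Ioi] with x hx
      exact mul_nonneg hx.le (hU x hx).le
    have hsub : Ioi (0:ℝ) ⊆ Function.support (fun x => x * U x) ∩ Ioi 0 :=
      fun x hx => ⟨(mul_pos hx (hU x hx)).ne', hx⟩
    refine lt_of_lt_of_le ?_ (measure_mono hsub)
    rw [Real.volume_Ioi]
    exact ENNReal.zero_lt_top
  refine ⟨hmain, ?_, ?_⟩
  · by_contra h
    push_neg at h
    obtain ⟨m, hlm, hmle⟩ : ∃ m : ℝ, lam < m ∧
        ENNReal.ofReal m ≤ essInf (fun x => ENNReal.ofReal (τ x / x))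
          (volume.restrict (Ioi 0)) := by
      rcases eq_or_ne (essInf (fun x => ENNReal.ofReal (τ x / x))
          (volume.restrict (Ioi 0))) ⊤ with hE | hE
      · exact ⟨lam + 1, by linarith, by rw [hE]; exact le_top⟩
      · refine ⟨_, (ENNReal.ofReal_lt_iff_lt_toReal hlam.le hE).1 h, ?_⟩
        rw [ENNReal.ofReal_toReal hE]
    have hae : ∀ᵐ x ∂(volume.restrict (Ioi (0:ℝ))),
        ENNReal.ofReal m ≤ ENNReal.ofReal (τ x / x) := by
      filter_upwards [ae_essInf_le (f := fun x => ENNReal.ofReal (τ x / x))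
        (μ := volume.restrict (Ioi 0))] with x hx
      exact le_trans hmle hx
    have hmono2 : (fun x => m * (x * U x)) ≤ᵐ[volume.restrict (Ioi (0:ℝ))]
        fun x => τ x * U x := by
      filter_upwards [hae, ae_restrict_mem measurableSet_Ioi] with x hx hx0
      have hτx : m ≤ τ x / x :=
        (ENNReal.ofReal_le_ofReal_iff (div_nonneg (hτnn x hx0) hx0.le)).1 hx
      calc m * (x * U x) ≤ (τ x / x) * (x * U x) :=
            mul_le_mul_of_nonneg_right hτx (mul_nonneg hx0.le (hU x hx0).le)
        _ = τ x * U x := by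
            have hxne : x ≠ 0 := ne_of_gt hx0
            field_simp
    have hle := integral_mono_ae (hxU.const_mul m) hτU hmono2
    rw [integral_const_mul] at hle
    rw [← hmain] at hle
    nlinarith
  · by_contra h
    push_neg at h
    have hEt : essSup (fun x => ENNReal.ofReal (τ x / x)) (volume.restrict (Ioi 0)) ≠ ⊤ :=
      h.ne_top
    have hMlam : (essSup (fun x => ENNReal.ofReal (τ x / x))
        (volume.restrict (Ioi 0))).toReal < lam :=
      (ENNReal.lt_ofReal_iff_toReal_lt hEt).1 h
    have hae : ∀ᵐ x ∂(volume.restrict (Ioi (0:ℝ))),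
        ENNReal.ofReal (τ x / x) ≤ ENNReal.ofReal ((essSup
          (fun x => ENNReal.ofReal (τ x / x)) (volume.restrict (Ioi 0))).toReal) := by
      filter_upwards [ENNReal.ae_le_essSup (μ := volume.restrict (Ioi 0))
        (fun x => ENNReal.ofReal (τ x / x))] with x hx
      rw [ENNReal.ofReal_toReal hEt]
      exact hx
    set M : ℝ := (essSup (fun x => ENNReal.ofReal (τ x / x))
      (volume.restrict (Ioi 0))).toReal with hMdef
    have hmono2 : (fun x => τ x * U x) ≤ᵐ[volume.restrict (Ioi (0:ℝ))]
        fun x => M * (x * U x) := by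
      filter_upwards [hae, ae_restrict_mem measurableSet_Ioi] with x hx hx0
      have hτx : τ x / x ≤ M :=
        (ENNReal.ofReal_le_ofReal_iff ENNReal.toReal_nonneg).1 hx
      calc τ x * U x = (τ x / x) * (x * U x) := by
            have hxne : x ≠ 0 := ne_of_gt hx0
            field_simp
        _ ≤ M * (x * U x) :=
            mul_le_mul_of_nonneg_right hτx (mul_nonneg hx0.le (hU x hx0).le)
    have hle := integral_mono_ae hτU (hxU.const_mul M) hmono2
    rw [integral_const_mul] at hle
    rw [← hmain] at hle
    nlinarith
end
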